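/- arXiv:0801.3185 — 14 statements merged into one kernel-verified Lean document; each statement's English description precedes it below -/
import Mathlib

section
/- If Γ𝟙 = 0, rᵀΓ = 0 and rᵀ𝟙 = 1, then for all real t, exp((Γ − 𝟙rᵀ)t) = exp(Γt) − (1 − e^{−t})·𝟙rᵀ. -/
open Matrix NormedSpace Filter
open scoped Kronecker

noncomputable section

/-- The all-ones vector. -/
def ones (p : ℕ) : Fin p → ℝ := fun _ => 1

/-!
With `P = 𝟙rᵀ`, the hypotheses give that `P` is idempotent and `ΓP = PΓ = 0`. Hence `tΓ`
and `-tP` commute, `exp(-tP) = 1 + (e^{-t} - 1) P`, and `exp(tΓ) P = P` because every positive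
power of `tΓ` kills `P`; multiplying out gives the formula.
-/

section BanachAlgebra

open scoped Nat

variable {𝔸 : Type*} [NormedRing 𝔸] [CompleteSpace 𝔸]

theorem exp_mul_eq_of_mul_eq_zero [NormedAlgebra ℚ 𝔸] {A B : 𝔸} (h : A * B = 0) :
    exp A * B = B := by
  have hsum := (exp_series_hasSum_exp' (𝕂 := ℚ) A).mul_right B
  refine hsum.unique (hasSum_single 0 fun n hn => ?_) |>.trans (by simp)
  obtain ⟨m, rfl⟩ := Nat.exists_eq_succ_of_ne_zero hn
  rw [smul_mul_assoc, pow_succ, mul_assoc, h, mul_zero, smul_zero]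

theorem IsIdempotentElem.exp_smul {𝕂 : Type*} [RCLike 𝕂] [NormedAlgebra 𝕂 𝔸] {P : 𝔸}
    (hP : IsIdempotentElem P) (c : 𝕂) :
    exp (c • P) = 1 - P + exp c • P := by
  have hterm : ∀ n : ℕ, (n !⁻¹ : 𝕂) • (c • P) ^ n =
      ((n ! : 𝕂)⁻¹ * c ^ n) • P + if n = 0 then 1 - P else 0 := by
    rintro (_ | n)
    · simp
    · rw [smul_pow, hP.pow_succ_eq, smul_smul, if_neg n.succ_ne_zero, add_zero]
  have hsum : HasSum (fun n : ℕ => (n !⁻¹ : 𝕂) • (c • P) ^ n) (exp c • P + (1 - P)) := by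
    simp_rw [hterm]
    exact ((exp_series_hasSum_exp' (𝕂 := 𝕂) c).smul_const P).add (hasSum_ite_eq 0 (1 - P))
  rw [(exp_series_hasSum_exp' (c • P)).unique hsum, add_comm]

theorem exp_add_smul_of_isIdempotentElem {𝕂 : Type*} [RCLike 𝕂] [NormedAlgebra 𝕂 𝔸]
    {A P : 𝔸} (hP : IsIdempotentElem P) (hAP : A * P = 0) (hPA : P * A = 0) (c : 𝕂) :
    exp (A + c • P) = exp A + (exp c - 1) • P := by
  let +nondep : NormedAlgebra ℚ 𝔸 := .restrictScalars ℚ 𝕂 𝔸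
  have hcomm : Commute A (c • P) := by
    rw [Commute, SemiconjBy, mul_smul_comm, smul_mul_assoc, hAP, hPA]
  rw [NormedSpace.exp_add_of_commute hcomm, hP.exp_smul, mul_add, mul_sub, mul_one, mul_smul_comm,
    exp_mul_eq_of_mul_eq_zero hAP, sub_smul, one_smul]
  abel

end BanachAlgebra

/-- exp((Γ − 𝟙rᵀ)t) = exp(Γt) − (1 − e^{−t})𝟙rᵀ. -/
theorem stmt1 {p : ℕ} (Γ : Matrix (Fin p) (Fin p) ℝ) (r : Fin p → ℝ)
    (hΓ1 : Γ *ᵥ ones p = 0) (hrΓ : r ᵥ* Γ = 0) (hr1 : ∑ i, r i = 1) (t : ℝ) :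
    NormedSpace.exp (t • (Γ - vecMulVec (ones p) r)) =
      NormedSpace.exp (t • Γ) - (1 - Real.exp (-t)) • vecMulVec (ones p) r := by
  have hP : IsIdempotentElem (vecMulVec (ones p) r) := by
    rw [IsIdempotentElem, vecMulVec_mul_vecMulVec]
    simp [dotProduct, ones, hr1]
  have hΓP : Γ * vecMulVec (ones p) r = 0 := by rw [mul_vecMulVec, hΓ1, zero_vecMulVec]
  have hPΓ : vecMulVec (ones p) r * Γ = 0 := by rw [vecMulVec_mul, hrΓ, vecMulVec_zero]
  have hexp : exp (t • Γ + (-t) • vecMulVec (ones p) r) =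
      exp (t • Γ) + (exp (-t) - 1) • vecMulVec (ones p) r :=
    open scoped Matrix.Norms.Operator in
    exp_add_smul_of_isIdempotentElem hP (by rw [smul_mul_assoc, hΓP, smul_zero])
      (by rw [mul_smul_comm, hPΓ, smul_zero]) (-t)
  rw [smul_sub, sub_eq_add_neg, ← neg_smul, hexp, ← Real.exp_eq_exp_ℝ]
  module
end
end

section
/- If Γ is connected (off-diagonal entries nonnegative, zero row sums, connected graph), then every nonzero eigenvalue of Γ has strictly negative real part. -/
open Matrix NormedSpace Filter
open scoped Kronecker

noncomputable section

/-- A connected matrix: nonnegative off-diagonal entries, zero row sums, and its directed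
graph (arc i → j iff Γ i j > 0) has a node to which there is a path from every other node. -/
def IsConnectedMatrix {p : ℕ} (Γ : Matrix (Fin p) (Fin p) ℝ) : Prop :=
  (∀ i j, i ≠ j → 0 ≤ Γ i j) ∧ (∀ i, ∑ j, Γ i j = 0) ∧
    ∃ k, ∀ i, Relation.ReflTransGen (fun a b => 0 < Γ a b) i k

/-!
By Gershgorin's theorem every eigenvalue of `Γ` lies in a disc centred at some diagonal entry
`Γ k k` with radius the off-diagonal row sum `∑_{j ≠ k} Γ k j = -Γ k k`. Such a disc lies in the
closed left half-plane and meets the imaginary axis only at `0`.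
-/

open Finset

theorem Complex.re_neg_of_mem_closedBall_neg {c : ℝ} {μ : ℂ}
    (hμ : μ ∈ Metric.closedBall (c : ℂ) (-c)) (hne : μ ≠ 0) : μ.re < 0 := by
  rw [mem_closedBall_iff_norm] at hμ
  have hc : c ≤ 0 := by linarith [norm_nonneg (μ - c)]
  have hsq : Complex.normSq (μ - c) ≤ c ^ 2 := by
    rw [← Complex.sq_norm]
    nlinarith [norm_nonneg (μ - c)]
  simp only [Complex.normSq_apply, Complex.sub_re, Complex.sub_im, Complex.ofReal_re,
    Complex.ofReal_im, sub_zero] at hsq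
  have hdisc : μ.re ^ 2 + μ.im ^ 2 ≤ 2 * c * μ.re := by nlinarith
  by_contra! hre
  have hnormSq : Complex.normSq μ ≤ 0 := by
    rw [Complex.normSq_apply]
    nlinarith [mul_nonpos_of_nonpos_of_nonneg hc hre]
  exact hne (Complex.normSq_eq_zero.1 (hnormSq.antisymm (Complex.normSq_nonneg μ)))

theorem Matrix.exists_mem_closedBall_diag_of_mem_spectrum {n : Type*} [Fintype n] [DecidableEq n]
    {Γ : Matrix n n ℝ} (hoff : ∀ i j, i ≠ j → 0 ≤ Γ i j) (hrow : ∀ i, ∑ j, Γ i j = 0) {μ : ℂ}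
    (hμ : μ ∈ spectrum ℂ (Γ.map Complex.ofReal)) :
    ∃ k, μ ∈ Metric.closedBall (Γ k k : ℂ) (-Γ k k) := by
  have hEig : Module.End.HasEigenvalue (Γ.map Complex.ofReal).toLin' μ := by
    rwa [Module.End.hasEigenvalue_iff_mem_spectrum, spectrum_toLin']
  obtain ⟨k, hk⟩ := eigenvalue_mem_ball hEig
  have hradius : ∑ j ∈ univ.erase k, ‖(Γ.map Complex.ofReal) k j‖ = -Γ k k := by
    calc ∑ j ∈ univ.erase k, ‖(Γ.map Complex.ofReal) k j‖
        = ∑ j ∈ univ.erase k, Γ k j := sum_congr rfl fun j hj => by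
          rw [Matrix.map_apply, Complex.norm_real, Real.norm_of_nonneg
            (hoff k j (ne_of_mem_erase hj).symm)]
      _ = -Γ k k := by rw [sum_erase_eq_sub (mem_univ k), hrow k, zero_sub]
  exact ⟨k, by rwa [hradius, Matrix.map_apply] at hk⟩

/-- Every nonzero eigenvalue of a connected matrix has strictly negative real part. -/
theorem stmt2 {p : ℕ} (Γ : Matrix (Fin p) (Fin p) ℝ) (hΓ : IsConnectedMatrix Γ) :
    ∀ μ ∈ spectrum ℂ (Γ.map Complex.ofReal), μ ≠ 0 → μ.re < 0 := by
  obtain ⟨hoff, hrow, -⟩ := hΓ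
  intro μ hμ hne
  obtain ⟨k, hk⟩ := Matrix.exists_mem_closedBall_diag_of_mem_spectrum hoff hrow hμ
  exact Complex.re_neg_of_mem_closedBall_neg hk hne
end
end

section
/- If Γ is connected, then exp(Γt) converges as t → ∞ to 𝟙rᵀ, where rᵀ is the left eigenvector of Γ for eigenvalue 0 normalized so that rᵀ𝟙 = 1. -/
/-!
For `t ≥ 0` the matrix `exp (t • Γ)` is row-stochastic: adding a multiple of the identity makes
`Γ` entrywise nonnegative, and `Γ *ᵥ 1 = 0`. Since every node reaches `k`, column `k` of
`exp Γ` is bounded below by some `ε > 0`, and Doeblin's argument shows that multiplying by such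
a stochastic matrix shrinks the oscillation `max x - min x` of any vector by the factor `1 - ε`.
Hence every column of `exp (t • Γ)` becomes constant at a geometric rate, and because
`r ᵥ* exp (t • Γ) = r` with `∑ i, r i = 1`, the constant in column `j` must be `r j`.
-/

open Matrix NormedSpace Filter
open scoped Kronecker

noncomputable section

open Finset Topology

namespace Matrix

variable {ι : Type*} [Fintype ι] [DecidableEq ι]

open scoped Matrix.Norms.Operator in
theorem hasSum_exp (A : Matrix ι ι ℝ) :
    HasSum (fun m : ℕ => (m.factorial : ℝ)⁻¹ • A ^ m) (exp A) :=
  exp_series_hasSum_exp' A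

theorem hasSum_exp_apply (A : Matrix ι ι ℝ) (i j : ι) :
    HasSum (fun m : ℕ => (m.factorial : ℝ)⁻¹ * (A ^ m) i j) (exp A i j) :=
  Pi.hasSum.1 (Pi.hasSum.1 (hasSum_exp A) i) j

theorem exp_mulVec_of_mulVec_eq_zero {A : Matrix ι ι ℝ} {v : ι → ℝ} (h : A *ᵥ v = 0) :
    exp A *ᵥ v = v := by
  have hmap := (hasSum_exp A).map (mulVec.addMonoidHomLeft v)
    (continuous_id.matrix_mulVec continuous_const)
  refine hmap.unique ((hasSum_single 0 fun m hm => ?_).trans_eq ?_)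
  · obtain ⟨m, rfl⟩ := Nat.exists_eq_succ_of_ne_zero hm
    simp [mulVec.addMonoidHomLeft, smul_mulVec, pow_succ, ← mulVec_mulVec, h]
  · simp [mulVec.addMonoidHomLeft]

theorem vecMul_exp_of_vecMul_eq_zero {A : Matrix ι ι ℝ} {r : ι → ℝ} (h : r ᵥ* A = 0) :
    r ᵥ* exp A = r := by
  rw [← mulVec_transpose, ← exp_transpose]
  exact exp_mulVec_of_mulVec_eq_zero (by rwa [mulVec_transpose])

theorem exp_eq_exp_neg_smul_exp_add_smul_one (A : Matrix ι ι ℝ) (c : ℝ) :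
    exp A = Real.exp (-c) • exp (A + c • 1) := by
  have hscalar : exp ((-c) • 1 : Matrix ι ι ℝ) = Real.exp (-c) • 1 := by
    rw [smul_one_eq_diagonal, exp_diagonal, Pi.exp_def, smul_one_eq_diagonal, Real.exp_eq_exp_ℝ]
  have hcomm : Commute (A + c • 1) ((-c) • 1) := (Commute.one_right _).smul_right _
  rw [← smul_one_mul, ← hscalar, ← exp_add_of_commute _ _ hcomm.symm, neg_smul,
    neg_add_cancel_comm_assoc]

section Nonneg

variable {A : Matrix ι ι ℝ}

theorem exists_pow_apply_pos (hA : ∀ i j, 0 ≤ A i j) {i k : ι}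
    (h : Relation.ReflTransGen (fun a b => 0 < A a b) i k) : ∃ m, 0 < (A ^ m) i k := by
  induction h using Relation.ReflTransGen.head_induction_on with
  | refl => exact ⟨0, by simp⟩
  | @head a b hab _ ih =>
    obtain ⟨m, hm⟩ := ih
    refine ⟨m + 1, (mul_pos hab hm).trans_le ?_⟩
    rw [pow_succ', mul_apply]
    exact single_le_sum (f := fun l => A a l * (A ^ m) l k)
      (fun l _ => mul_nonneg (hA a l) (pow_apply_nonneg hA m l k)) (mem_univ b)

theorem exp_apply_nonneg (hA : ∀ i j, 0 ≤ A i j) (i j : ι) : 0 ≤ exp A i j :=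
  (hasSum_exp_apply A i j).nonneg fun m => mul_nonneg (by positivity) (pow_apply_nonneg hA m i j)

theorem exp_apply_pos (hA : ∀ i j, 0 ≤ A i j) {i k : ι}
    (h : Relation.ReflTransGen (fun a b => 0 < A a b) i k) : 0 < exp A i k := by
  obtain ⟨m, hm⟩ := exists_pow_apply_pos hA h
  refine (by positivity : 0 < (m.factorial : ℝ)⁻¹ * (A ^ m) i k).trans_le ?_
  exact le_hasSum (hasSum_exp_apply A i k) m fun m' _ =>
    mul_nonneg (by positivity) (pow_apply_nonneg hA m' i k)

end Nonneg

section OffDiagNonneg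

variable {A : Matrix ι ι ℝ}

theorem add_smul_one_apply_nonneg (hA : ∀ i j, i ≠ j → 0 ≤ A i j) (i j : ι) :
    0 ≤ (A + (∑ l, |A l l|) • 1) i j := by
  by_cases hij : i = j
  · subst hij
    have := single_le_sum (f := fun l => |A l l|) (fun l _ => abs_nonneg _) (mem_univ i)
    simp only [add_apply, smul_apply, one_apply_eq, smul_eq_mul, mul_one]
    linarith [neg_abs_le (A i i)]
  · simpa [one_apply_ne hij] using hA i j hij

theorem exp_apply_nonneg_of_offDiag (hA : ∀ i j, i ≠ j → 0 ≤ A i j) (i j : ι) :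
    0 ≤ exp A i j := by
  rw [exp_eq_exp_neg_smul_exp_add_smul_one A (∑ l, |A l l|), smul_apply, smul_eq_mul]
  exact mul_nonneg (Real.exp_nonneg _) (exp_apply_nonneg (add_smul_one_apply_nonneg hA) i j)

theorem exp_apply_pos_of_offDiag (hA : ∀ i j, i ≠ j → 0 ≤ A i j) {i k : ι}
    (h : Relation.ReflTransGen (fun a b => 0 < A a b) i k) : 0 < exp A i k := by
  rw [exp_eq_exp_neg_smul_exp_add_smul_one A (∑ l, |A l l|), smul_apply, smul_eq_mul]
  refine mul_pos (Real.exp_pos _) (exp_apply_pos (add_smul_one_apply_nonneg hA) ?_)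
  refine Relation.ReflTransGen.lift' id (fun a b hab => ?_) i k h
  by_cases hab' : a = b
  · exact hab' ▸ Relation.ReflTransGen.refl
  · exact .single (by simpa [one_apply_ne hab'] using hab)

theorem exp_mem_rowStochastic (hA : ∀ i j, i ≠ j → 0 ≤ A i j) (hrow : ∀ i, ∑ j, A i j = 0) :
    exp A ∈ rowStochastic ℝ ι := by
  refine mem_rowStochastic.2 ⟨exp_apply_nonneg_of_offDiag hA, exp_mulVec_of_mulVec_eq_zero ?_⟩
  ext i
  simp [mulVec, dotProduct, hrow]

end OffDiagNonneg

theorem mulVec_apply_le_of_mem_rowStochastic {P : Matrix ι ι ℝ} {k : ι} {δ : ℝ}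
    (hP : P ∈ rowStochastic ℝ ι) (hδ : ∀ i, δ ≤ P i k) {x : ι → ℝ} {M : ℝ}
    (hx : ∀ l, x l ≤ M) (i : ι) : (P *ᵥ x) i ≤ M - δ * (M - x k) :=
  calc (P *ᵥ x) i = M - ∑ l, P i l * (M - x l) := by
        simp [mulVec, dotProduct, mul_sub, sum_sub_distrib, ← sum_mul,
          sum_row_of_mem_rowStochastic hP]
    _ ≤ M - P i k * (M - x k) := by
        gcongr
        exact single_le_sum (f := fun l => P i l * (M - x l))
          (fun l _ => mul_nonneg (nonneg_of_mem_rowStochastic hP) (sub_nonneg.2 (hx l)))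
          (mem_univ k)
    _ ≤ M - δ * (M - x k) :=
        sub_le_sub_left (mul_le_mul_of_nonneg_right (hδ i) (sub_nonneg.2 (hx k))) M

end Matrix

section Oscillation

variable {ι : Type*} [Fintype ι] [Nonempty ι]

def osc (x : ι → ℝ) : ℝ := univ.sup' univ_nonempty x - univ.inf' univ_nonempty x

theorem sub_le_osc (x : ι → ℝ) (i j : ι) : x i - x j ≤ osc x :=
  sub_le_sub (le_sup' x (mem_univ i)) (inf'_le x (mem_univ j))

theorem osc_nonneg (x : ι → ℝ) : 0 ≤ osc x := by
  obtain ⟨i⟩ := ‹Nonempty ι›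
  simpa using sub_le_osc x i i

theorem abs_sub_le_osc (x : ι → ℝ) (i j : ι) : |x i - x j| ≤ osc x :=
  abs_sub_le_iff.2 ⟨sub_le_osc x i j, sub_le_osc x j i⟩

variable [DecidableEq ι] {P : Matrix ι ι ℝ} {k : ι} {δ : ℝ}

theorem osc_mulVec_le (hP : P ∈ rowStochastic ℝ ι) (hδ : ∀ i, δ ≤ P i k) (x : ι → ℝ) :
    osc (P *ᵥ x) ≤ (1 - δ) * osc x := by
  set M := univ.sup' univ_nonempty x
  set m := univ.inf' univ_nonempty x
  have hupper : univ.sup' univ_nonempty (P *ᵥ x) ≤ M - δ * (M - x k) :=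
    sup'_le _ _ fun i _ =>
      mulVec_apply_le_of_mem_rowStochastic hP hδ (fun l => le_sup' x (mem_univ l)) i
  have hlower : m + δ * (x k - m) ≤ univ.inf' univ_nonempty (P *ᵥ x) := by
    refine le_inf' _ _ fun i _ => ?_
    have := mulVec_apply_le_of_mem_rowStochastic hP hδ (x := -x) (M := -m)
      (fun l => neg_le_neg (inf'_le x (mem_univ l))) i
    rw [mulVec_neg, Pi.neg_apply, Pi.neg_apply] at this
    linarith
  unfold osc
  linarith

end Oscillation

theorem tendsto_zero_of_antitone_of_le_mul {f : ℝ → ℝ} {q : ℝ} (hf : ∀ t, 0 ≤ f t)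
    (hanti : Antitone f) (hstep : ∀ n : ℕ, f (n + 1) ≤ q * f n) (hq₀ : 0 ≤ q) (hq₁ : q < 1) :
    Tendsto f atTop (𝓝 0) := by
  have hgeom : ∀ n : ℕ, f n ≤ q ^ n * f 0 := by
    intro n
    induction n with
    | zero => simp
    | succ n ih =>
      calc f (n + 1 : ℕ) ≤ q * f n := by exact_mod_cast hstep n
        _ ≤ q * (q ^ n * f 0) := by gcongr
        _ = q ^ (n + 1) * f 0 := by ring
  have hlim : Tendsto (fun t : ℝ => q ^ ⌊t⌋₊ * f 0) atTop (𝓝 0) := by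
    simpa using ((tendsto_pow_atTop_nhds_zero_of_lt_one hq₀ hq₁).comp
      tendsto_nat_floor_atTop).mul_const (f 0)
  refine squeeze_zero' (.of_forall hf) ?_ hlim
  filter_upwards [eventually_ge_atTop 0] with t ht
  exact (hanti (Nat.floor_le ht)).trans (hgeom _)

section Limit

variable {ι : Type*} [Fintype ι] [Nonempty ι]

theorem tendsto_vecMulVec_of_tendsto_osc {α : Type*} {l : Filter α} {F : α → Matrix ι ι ℝ}
    {r : ι → ℝ} (hr : ∀ a, r ᵥ* F a = r) (hr1 : ∑ i, r i = 1)
    (hosc : ∀ j, Tendsto (fun a => osc fun i => F a i j) l (𝓝 0)) :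
    Tendsto F l (𝓝 (vecMulVec (fun _ => 1) r)) := by
  refine tendsto_pi_nhds.2 fun i => tendsto_pi_nhds.2 fun j => ?_
  have hdev : ∀ a, F a i j - r j = ∑ m, r m * (F a i j - F a m j) := fun a => by
    have hrj := congrFun (hr a) j
    simp only [vecMul, dotProduct] at hrj
    simp [mul_sub, sum_sub_distrib, ← sum_mul, hr1, hrj]
  rw [vecMulVec_apply, one_mul, ← tendsto_sub_nhds_zero_iff]
  simp only [hdev]
  rw [show (0 : ℝ) = ∑ m : ι, r m * 0 by simp]
  exact tendsto_finsetSum _ fun m _ => .const_mul _ <| squeeze_zero_norm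
    (fun a => (Real.norm_eq_abs _).trans_le (abs_sub_le_osc (F a · j) i m)) (hosc j)

variable [DecidableEq ι]

theorem tendsto_osc_exp_smul_apply {A : Matrix ι ι ℝ} (hA : ∀ i j, i ≠ j → 0 ≤ A i j)
    (hrow : ∀ i, ∑ j, A i j = 0) {k : ι}
    (hk : ∀ i, Relation.ReflTransGen (fun a b => 0 < A a b) i k) (j : ι) :
    Tendsto (fun t : ℝ => osc fun i => exp (t • A) i j) atTop (𝓝 0) := by
  set E := fun t : ℝ => exp (t • A)
  have hadd : ∀ s t, E (s + t) = E s * E t := fun s t => by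
    simp only [E, add_smul]
    exact exp_add_of_commute _ _ (((Commute.refl A).smul_left s).smul_right t)
  have hcol : ∀ s t, (E (s + t) · j) = E s *ᵥ (E t · j) := fun s t => by
    ext i
    rw [hadd]
    rfl
  have hstoch : ∀ s, 0 ≤ s → E s ∈ rowStochastic ℝ ι := fun s hs =>
    exp_mem_rowStochastic (fun i j hij => mul_nonneg hs (hA i j hij))
      (fun i => by simp [← mul_sum, hrow])
  obtain ⟨ε, hε₀, hε⟩ : ∃ ε > 0, ∀ i, ε ≤ E 1 i k :=
    ⟨univ.inf' univ_nonempty (E 1 · k), (lt_inf'_iff _).2 fun i _ => by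
      simpa [E] using exp_apply_pos_of_offDiag hA (hk i), fun i => inf'_le _ (mem_univ i)⟩
  have hε₁ : ε ≤ 1 := (hε k).trans (le_one_of_mem_rowStochastic (hstoch 1 zero_le_one))
  refine tendsto_zero_of_antitone_of_le_mul (q := 1 - ε) (fun t => osc_nonneg _)
    (fun s t hst => ?_) (fun n => ?_) (by linarith) (by linarith)
  · have := osc_mulVec_le (hstoch (t - s) (sub_nonneg.2 hst)) (δ := 0) (k := k)
      (fun i => nonneg_of_mem_rowStochastic (hstoch (t - s) (sub_nonneg.2 hst))) (E s · j)
    rwa [← hcol, sub_add_cancel, sub_zero, one_mul] at this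
  · have := osc_mulVec_le (hstoch 1 zero_le_one) hε (E n · j)
    rwa [← hcol, add_comm] at this

end Limit

/-- For connected Γ, exp(Γt) → 𝟙rᵀ as t → ∞, where rᵀΓ = 0 and rᵀ𝟙 = 1. -/
theorem stmt3 {p : ℕ} (Γ : Matrix (Fin p) (Fin p) ℝ) (hΓ : IsConnectedMatrix Γ)
    (r : Fin p → ℝ) (hrΓ : r ᵥ* Γ = 0) (hr1 : ∑ i, r i = 1) :
    Tendsto (fun t : ℝ => NormedSpace.exp (t • Γ)) atTop (nhds (vecMulVec (ones p) r)) := by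
  obtain ⟨hoff, hrow, k, hk⟩ := hΓ
  have : Nonempty (Fin p) := ⟨k⟩
  exact tendsto_vecMulVec_of_tendsto_osc
    (fun t => vecMul_exp_of_vecMul_eq_zero (by rw [vecMul_smul, hrΓ, smul_zero])) hr1
    (tendsto_osc_exp_smul_apply hoff hrow hk)
end
end

section
/- If Γ is connected with normalized left null vector r (rᵀΓ = 0, rᵀ𝟙 = 1), then the matrix Γ − 𝟙rᵀ is Hurwitz, i.e. all its eigenvalues have strictly negative real parts. -/
open Matrix NormedSpace Filter
open scoped Kronecker

noncomputable section

/-!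
Let `v ≠ 0` satisfy `(Γ - 𝟙rᵀ) v = μ v` with `0 ≤ Re μ`. Pairing with `r` kills `Γ v` and
gives `(μ + 1) (r ⬝ v) = 0`, so `r ⬝ v = 0` and `v` is an eigenvector of `Γ` itself. Since `Γ` has
nonnegative off-diagonal entries and zero row sums, its Gershgorin discs are `|z + c| ≤ c` with
`c ≥ 0`, which meet the closed right half-plane only in `0`; hence `Γ v = 0`. A maximum principle
propagates the maximum (and the minimum) of the real and imaginary parts of `v` along the edges
of `Γ` to the root `k`, so `v` is constant, and `r ⬝ v = 0` with `∑ r = 1` forces `v = 0`.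
-/

namespace Matrix

theorem dotProduct_eq_zero_and_mulVec_eq_smul_of_sub_vecMulVec_mulVec_eq_smul
    {K ι : Type*} [CommRing K] [NoZeroDivisors K] [Fintype ι] {Γ : Matrix ι ι K}
    {r v : ι → K} {μ : K} (hrΓ : r ᵥ* Γ = 0) (hr1 : ∑ i, r i = 1) (hμ : μ ≠ -1)
    (hv : (Γ - vecMulVec 1 r) *ᵥ v = μ • v) : r ⬝ᵥ v = 0 ∧ Γ *ᵥ v = μ • v := by
  rw [sub_mulVec, vecMulVec_mulVec, op_smul_eq_smul, sub_eq_iff_eq_add] at hv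
  have hs : (μ + 1) * (r ⬝ᵥ v) = 0 := by
    have := congrArg (r ⬝ᵥ ·) hv
    simp only [dotProduct_mulVec, hrΓ, zero_dotProduct, dotProduct_add, dotProduct_smul,
      dotProduct_one, hr1, smul_eq_mul, mul_one] at this
    linear_combination -this
  have hs0 : r ⬝ᵥ v = 0 :=
    (mul_eq_zero.1 hs).resolve_left fun h => hμ (eq_neg_of_add_eq_zero_left h)
  exact ⟨hs0, by simpa [hs0] using hv⟩

variable {ι : Type*} [Fintype ι] {Γ : Matrix ι ι ℝ}

theorem apply_eq_of_mulVec_eq_zero_of_forall_le (hoff : ∀ i j, i ≠ j → 0 ≤ Γ i j)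
    (hrow : ∀ i, ∑ j, Γ i j = 0) {u : ι → ℝ} (hu : Γ *ᵥ u = 0) {i j : ι}
    (hmax : ∀ l, u l ≤ u i) (hij : 0 < Γ i j) : u j = u i := by
  have hsum : ∑ l, Γ i l * (u l - u i) = 0 := by
    simp only [mul_sub, Finset.sum_sub_distrib, ← Finset.sum_mul, hrow i, zero_mul, sub_zero]
    exact congrFun hu i
  have hterm : ∀ l ∈ Finset.univ, Γ i l * (u l - u i) ≤ 0 := by
    intro l _
    rcases eq_or_ne i l with rfl | hil
    · simp
    · exact mul_nonpos_of_nonneg_of_nonpos (hoff i l hil) (sub_nonpos.2 (hmax l))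
  have hj := (Finset.sum_eq_zero_iff_of_nonpos hterm).1 hsum j (Finset.mem_univ j)
  exact sub_eq_zero.1 ((mul_eq_zero.1 hj).resolve_left hij.ne')

theorem apply_eq_of_mulVec_eq_zero_of_reflTransGen (hoff : ∀ i j, i ≠ j → 0 ≤ Γ i j)
    (hrow : ∀ i, ∑ j, Γ i j = 0) {u : ι → ℝ} (hu : Γ *ᵥ u = 0) {i j : ι}
    (hmax : ∀ l, u l ≤ u i) (hij : Relation.ReflTransGen (fun a b => 0 < Γ a b) i j) :
    u j = u i := by
  induction hij with
  | refl => rfl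
  | tail _ hbc ih =>
    rw [apply_eq_of_mulVec_eq_zero_of_forall_le hoff hrow hu (ih ▸ hmax) hbc, ih]

theorem apply_eq_of_mulVec_eq_zero (hoff : ∀ i j, i ≠ j → 0 ≤ Γ i j)
    (hrow : ∀ i, ∑ j, Γ i j = 0) {k : ι}
    (hk : ∀ i, Relation.ReflTransGen (fun a b => 0 < Γ a b) i k) {u : ι → ℝ}
    (hu : Γ *ᵥ u = 0) (a : ι) : u a = u k := by
  have : Nonempty ι := ⟨k⟩
  obtain ⟨imax, himax⟩ := Finite.exists_max u
  obtain ⟨imin, himin⟩ := Finite.exists_min u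
  have hk_max : u k = u imax :=
    apply_eq_of_mulVec_eq_zero_of_reflTransGen hoff hrow hu himax (hk imax)
  have hk_min : -u k = -u imin :=
    apply_eq_of_mulVec_eq_zero_of_reflTransGen hoff hrow (u := -u)
      (by rw [mulVec_neg, hu, neg_zero]) (fun l => neg_le_neg (himin l)) (hk imin)
  linarith [himax a, himin a]

theorem apply_eq_of_map_ofReal_mulVec_eq_zero (hoff : ∀ i j, i ≠ j → 0 ≤ Γ i j)
    (hrow : ∀ i, ∑ j, Γ i j = 0) {k : ι}
    (hk : ∀ i, Relation.ReflTransGen (fun a b => 0 < Γ a b) i k) {v : ι → ℂ}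
    (hv : Γ.map Complex.ofReal *ᵥ v = 0) (a : ι) : v a = v k := by
  have hre : Γ *ᵥ (fun i => (v i).re) = 0 := funext fun i => by
    simpa [mulVec, dotProduct, Complex.re_sum] using congrArg Complex.re (congrFun hv i)
  have him : Γ *ᵥ (fun i => (v i).im) = 0 := funext fun i => by
    simpa [mulVec, dotProduct, Complex.im_sum] using congrArg Complex.im (congrFun hv i)
  exact Complex.ext (apply_eq_of_mulVec_eq_zero hoff hrow hk hre a)
    (apply_eq_of_mulVec_eq_zero hoff hrow hk him a)

theorem eq_zero_of_hasEigenvalue_of_re_nonneg [DecidableEq ι] (hoff : ∀ i j, i ≠ j → 0 ≤ Γ i j)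
    (hrow : ∀ i, ∑ j, Γ i j = 0)
    {μ : ℂ} (hμ : Module.End.HasEigenvalue (toLin' (Γ.map Complex.ofReal)) μ)
    (hre : 0 ≤ μ.re) : μ = 0 := by
  obtain ⟨i, hi⟩ := eigenvalue_mem_ball hμ
  set c := -Γ i i
  have hradius : ∑ j ∈ Finset.univ.erase i, ‖(Γ.map Complex.ofReal) i j‖ = c := by
    have hnorm : ∀ j ∈ Finset.univ.erase i, ‖(Γ.map Complex.ofReal) i j‖ = Γ i j :=
      fun j hj => by simp [abs_of_nonneg (hoff i j (Finset.ne_of_mem_erase hj).symm)]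
    have hsplit := Finset.add_sum_erase Finset.univ (Γ i) (Finset.mem_univ i)
    rw [Finset.sum_congr rfl hnorm]
    linarith [hrow i]
  rw [hradius, Metric.mem_closedBall, dist_eq_norm] at hi
  have hc : 0 ≤ c := (norm_nonneg _).trans hi
  have hsq : (μ.re + c) ^ 2 + μ.im ^ 2 ≤ c ^ 2 := by
    have := pow_le_pow_left₀ (norm_nonneg _) hi 2
    rw [Complex.sq_norm, Complex.normSq_apply] at this
    simp only [map_apply, Complex.sub_re, Complex.ofReal_re, Complex.sub_im,
      Complex.ofReal_im, sub_zero] at this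
    nlinarith
  have hre0 : μ.re = 0 := by nlinarith [sq_nonneg μ.im]
  refine Complex.ext hre0 (pow_eq_zero_iff two_ne_zero |>.1 ?_)
  nlinarith [sq_nonneg μ.im]

end Matrix

/-- For connected Γ with normalized left null vector r, the matrix Γ − 𝟙rᵀ is Hurwitz. -/
theorem stmt4 {p : ℕ} (Γ : Matrix (Fin p) (Fin p) ℝ) (hΓ : IsConnectedMatrix Γ)
    (r : Fin p → ℝ) (hrΓ : r ᵥ* Γ = 0) (hr1 : ∑ i, r i = 1) :
    ∀ μ ∈ spectrum ℂ ((Γ - vecMulVec (ones p) r).map Complex.ofReal), μ.re < 0 := by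
  obtain ⟨hoff, hrow, k, hk⟩ := hΓ
  intro μ hμ
  by_contra! hre
  have hmap : (Γ - vecMulVec (ones p) r).map Complex.ofReal =
      Γ.map Complex.ofReal - vecMulVec 1 (Complex.ofReal ∘ r) := by
    ext i j; simp [vecMulVec_apply, ones]
  rw [hmap, ← spectrum_toLin', ← Module.End.hasEigenvalue_iff_mem_spectrum] at hμ
  obtain ⟨v, hv, hv0⟩ := hμ.exists_hasEigenvector
  have hrΓc : (Complex.ofReal ∘ r) ᵥ* Γ.map Complex.ofReal = 0 := funext fun j =>
    (RingHom.map_vecMul Complex.ofRealHom Γ r j).symm.trans (by simp [hrΓ])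
  have hr1c : ∑ i, (Complex.ofReal ∘ r) i = 1 := by simp [← Complex.ofReal_sum, hr1]
  have hμ1 : μ ≠ -1 := by rintro rfl; norm_num at hre
  obtain ⟨hs, hΓv⟩ := dotProduct_eq_zero_and_mulVec_eq_smul_of_sub_vecMulVec_mulVec_eq_smul
    hrΓc hr1c hμ1 ((toLin'_apply _ _).symm.trans (Module.End.mem_eigenspace_iff.1 hv))
  have hμ0 : μ = 0 := eq_zero_of_hasEigenvalue_of_re_nonneg hoff hrow
    (Module.End.hasEigenvalue_of_hasEigenvector
      ⟨Module.End.mem_eigenspace_iff.2 ((toLin'_apply _ _).trans hΓv), hv0⟩) hre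
  have hconst := apply_eq_of_map_ofReal_mulVec_eq_zero hoff hrow hk (by simpa [hμ0] using hΓv)
  have hvk : v k = 0 := by
    simpa [dotProduct, hconst, ← Finset.sum_mul, ← Complex.ofReal_sum, hr1] using hs
  exact hv0 (funext fun a => (hconst a).trans hvk)
end
end

section
/- Let P, Q be symmetric positive definite with (Γ − 𝟙rᵀ)ᵀP + P(Γ − 𝟙rᵀ) = −Q, and define P̂ := (I − 𝟙rᵀ)ᵀP(I − 𝟙rᵀ) and Q̂ := (I − 𝟙rᵀ)ᵀQ(I − 𝟙rᵀ). Then ΓᵀP̂ + P̂Γ = −Q̂. -/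
/-!
Write E = 𝟙rᵀ and Π = I − E. Since rᵀ𝟙 = 1, E is idempotent, and Γ𝟙 = 0, rᵀΓ = 0 give
ΓE = EΓ = 0. Hence (Γ − E)Π = Γ = ΠΓ, and conjugating the Lyapunov equation for Γ − E by Π
yields the one for Γ.
-/

open Matrix

noncomputable section

theorem IsIdempotentElem.sub_mul_one_sub_of_mul_eq_zero {α : Type*} [Ring α] {e g : α}
    (he : IsIdempotentElem e) (hge : g * e = 0) : (g - e) * (1 - e) = g := by
  rw [sub_mul, mul_sub, mul_sub, mul_one, mul_one, hge, he.eq, sub_zero, sub_self, sub_zero]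

section Matrix

variable {n R : Type*} [Fintype n]

theorem Matrix.isIdempotentElem_vecMulVec [CommSemiring R] {u r : n → R} (h : r ⬝ᵥ u = 1) :
    IsIdempotentElem (vecMulVec u r) := by
  rw [IsIdempotentElem, vecMulVec_mul_vecMulVec, h, one_smul]

theorem Matrix.transpose_mul_conj_add_conj_mul [CommSemiring R] {A G S P : Matrix n n R}
    (hA : A * S = G) (hS : S * G = G) :
    Gᵀ * (Sᵀ * P * S) + Sᵀ * P * S * G = Sᵀ * (Aᵀ * P + P * A) * S := by
  have hG : Gᵀ * Sᵀ = Sᵀ * Aᵀ := by rw [← transpose_mul, hS, ← hA, transpose_mul]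
  calc Gᵀ * (Sᵀ * P * S) + Sᵀ * P * S * G = Gᵀ * Sᵀ * P * S + Sᵀ * P * (S * G) := by
        simp only [Matrix.mul_assoc]
    _ = Sᵀ * Aᵀ * P * S + Sᵀ * P * (A * S) := by rw [hG, hS, ← hA]
    _ = Sᵀ * (Aᵀ * P + P * A) * S := by
        simp only [Matrix.mul_add, Matrix.add_mul, Matrix.mul_assoc]

end Matrix

theorem stmt5_general {p : ℕ} (Γ : Matrix (Fin p) (Fin p) ℝ) (r : Fin p → ℝ)
    (hΓ1 : Γ *ᵥ ones p = 0) (hrΓ : r ᵥ* Γ = 0) (hr1 : ∑ i, r i = 1)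
    (P Q : Matrix (Fin p) (Fin p) ℝ)
    (hlyap : (Γ - vecMulVec (ones p) r)ᵀ * P + P * (Γ - vecMulVec (ones p) r) = -Q) :
    Γᵀ * ((1 - vecMulVec (ones p) r)ᵀ * P * (1 - vecMulVec (ones p) r)) +
        ((1 - vecMulVec (ones p) r)ᵀ * P * (1 - vecMulVec (ones p) r)) * Γ =
      -((1 - vecMulVec (ones p) r)ᵀ * Q * (1 - vecMulVec (ones p) r)) := by
  set E := vecMulVec (ones p) r
  have hE : IsIdempotentElem E := isIdempotentElem_vecMulVec (by simpa [dotProduct, ones] using hr1)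
  have hΓE : Γ * E = 0 := by rw [mul_vecMulVec, hΓ1, zero_vecMulVec]
  have hEΓ : E * Γ = 0 := by rw [vecMulVec_mul, hrΓ, vecMulVec_zero]
  have hprojΓ : (1 - E) * Γ = Γ := by rw [sub_mul, one_mul, hEΓ, sub_zero]
  rw [transpose_mul_conj_add_conj_mul (hE.sub_mul_one_sub_of_mul_eq_zero hΓE) hprojΓ, hlyap,
    Matrix.mul_neg, Matrix.neg_mul]

/-- Projecting a Lyapunov equation for Γ − 𝟙rᵀ by I − 𝟙rᵀ gives one for Γ. -/
theorem stmt5 {p : ℕ} (Γ : Matrix (Fin p) (Fin p) ℝ) (r : Fin p → ℝ)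
    (hΓ1 : Γ *ᵥ ones p = 0) (hrΓ : r ᵥ* Γ = 0) (hr1 : ∑ i, r i = 1)
    (P Q : Matrix (Fin p) (Fin p) ℝ) (hP : P.PosDef) (hQ : Q.PosDef)
    (hlyap : (Γ - vecMulVec (ones p) r)ᵀ * P + P * (Γ - vecMulVec (ones p) r) = -Q) :
    Γᵀ * ((1 - vecMulVec (ones p) r)ᵀ * P * (1 - vecMulVec (ones p) r)) +
        ((1 - vecMulVec (ones p) r)ᵀ * P * (1 - vecMulVec (ones p) r)) * Γ =
      -((1 - vecMulVec (ones p) r)ᵀ * Q * (1 - vecMulVec (ones p) r)) :=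
  stmt5_general Γ r hΓ1 hrΓ hr1 P Q hlyap
end
end

section
/- Let F ∈ ℝ^{n×n} be neutrally stable with all eigenvalues on the imaginary axis. Then the limit P := lim_{t→∞} t^{-1} ∫₀ᵗ exp(Fᵀτ) exp(Fτ) dτ exists. -/
open Matrix NormedSpace Filter
open scoped Kronecker

noncomputable section

/-!
Over `ℂ`, semisimplicity makes `F` diagonalizable, `F = Q D Q⁻¹` with `D = diag d` and every
`d k` purely imaginary. Each entry of `exp(Fᵀτ) exp(Fτ)` is then a linear combination of the
exponentials `exp(τ (d k + d l))`, and the Cesàro mean of `exp(τ z)` for imaginary `z` tends to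
`1` if `z = 0` and to `0` otherwise, since `∫₀ᵗ exp(τ z) dτ` stays bounded by `2 / |z|`.
-/

open Module Topology

def cesaroMean {E : Type*} [NormedAddCommGroup E] [NormedSpace ℝ E]
    (g : ℝ → E) (t : ℝ) : E :=
  t⁻¹ • ∫ τ in (0 : ℝ)..t, g τ

theorem tendsto_cesaroMean_cexp_mul {z : ℂ} (hz : z.re = 0) :
    Tendsto (cesaroMean fun τ : ℝ => Complex.exp (τ * z)) atTop
      (𝓝 (if z = 0 then 1 else 0)) := by
  rcases eq_or_ne z 0 with rfl | hz0
  · refine tendsto_const_nhds.congr' ?_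
    filter_upwards [eventually_ne_atTop 0] with t ht
    simp [cesaroMean, ht]
  · rw [if_neg hz0]
    have hint (t : ℝ) :
        ∫ τ in (0 : ℝ)..t, Complex.exp (τ * z) = (Complex.exp (t * z) - 1) / z := by
      simp_rw [mul_comm _ z]
      simp [integral_exp_mul_complex hz0]
    refine squeeze_zero_norm' (a := fun t : ℝ => t⁻¹ * (2 / ‖z‖)) ?_ ?_
    · filter_upwards [eventually_gt_atTop 0] with t ht
      rw [cesaroMean, hint, norm_smul, norm_div, Real.norm_of_nonneg (inv_nonneg.2 ht.le)]
      gcongr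
      calc ‖Complex.exp (t * z) - 1‖ ≤ ‖Complex.exp (t * z)‖ + ‖(1 : ℂ)‖ :=
            norm_sub_le _ _
        _ = 2 := by simp [Complex.norm_exp, hz]; norm_num
    · simpa using tendsto_inv_atTop_zero.mul_const (2 / ‖z‖)

theorem cesaroMean_sum_mul_cexp {ι : Type*} [Fintype ι] (c z : ι → ℂ) (t : ℝ) :
    cesaroMean (fun τ : ℝ => ∑ k, c k * Complex.exp (τ * z k)) t =
      ∑ k, c k * cesaroMean (fun τ : ℝ => Complex.exp (τ * z k)) t := by
  have hcont (k : ι) : Continuous fun τ : ℝ => Complex.exp (τ * z k) := by fun_prop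
  simp only [cesaroMean, Finset.smul_sum, intervalIntegral.integral_finsetSum
    (fun k _ => ((hcont k).const_mul (c k)).intervalIntegrable 0 t),
    intervalIntegral.integral_const_mul, mul_smul_comm]

theorem tendsto_cesaroMean_sum_mul_cexp {ι : Type*} [Fintype ι] (c z : ι → ℂ)
    (hz : ∀ k, (z k).re = 0) :
    Tendsto (cesaroMean fun τ : ℝ => ∑ k, c k * Complex.exp (τ * z k)) atTop
      (𝓝 (∑ k, c k * if z k = 0 then 1 else 0)) := by
  simp only [funext (cesaroMean_sum_mul_cexp c z)]
  exact tendsto_finsetSum _ fun k _ => (tendsto_cesaroMean_cexp_mul (hz k)).const_mul (c k)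

theorem cesaroMean_ofReal (g : ℝ → ℝ) (t : ℝ) :
    cesaroMean (fun τ => (g τ : ℂ)) t = cesaroMean g t := by
  simp [cesaroMean, intervalIntegral.integral_ofReal]

theorem Filter.Tendsto.cesaroMean_of_ofReal {g : ℝ → ℝ} {L : ℂ}
    (h : Tendsto (cesaroMean fun τ => (g τ : ℂ)) atTop (𝓝 L)) :
    Tendsto (cesaroMean g) atTop (𝓝 L.re) := by
  simpa [Function.comp_def, cesaroMean_ofReal] using (Complex.continuous_re.tendsto L).comp h

theorem Module.End.iSup_eigenspace_eq_top_of_ker_sq {K V : Type*} [Field K] [IsAlgClosed K]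
    [AddCommGroup V] [Module K V] [FiniteDimensional K V] (f : Module.End K V)
    (h : ∀ μ, f.HasEigenvalue μ → ∀ v,
      (f - μ • 1) ((f - μ • 1) v) = 0 → (f - μ • 1) v = 0) :
    ⨆ μ, f.eigenspace μ = ⊤ := by
  refine eq_top_iff.2 <| (End.iSup_maxGenEigenspace_eq_top f).ge.trans (iSup_mono fun μ => ?_)
  set g := f - μ • 1
  have hsq : LinearMap.ker (g ^ 1) = LinearMap.ker (g ^ 2) := by
    refine le_antisymm (LinearMap.ker_le_ker_comp _ _) fun v hv => ?_
    by_cases hμ : f.HasEigenvalue μ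
    · exact h μ hμ v hv
    · refine not_not.1 fun hgv => hμ (End.hasEigenvalue_of_hasEigenvector ⟨?_, hgv⟩)
      rw [End.mem_eigenspace_iff, ← sub_eq_zero]
      simpa [g, pow_two] using hv
  rw [← End.iSup_genEigenspace_eq]
  refine iSup_le fun k => ?_
  rw [End.genEigenspace_nat, End.eigenspace_def]
  rcases k with _ | k
  · simp [End.one_eq_id]
  · rw [add_comm, ← End.ker_pow_constant hsq k, pow_one]

theorem Matrix.exists_eq_conj_diagonal_of_ker_sq {K n : Type*} [Field K] [IsAlgClosed K]
    [Fintype n] [DecidableEq n] (A : Matrix n n K)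
    (h : ∀ μ ∈ spectrum K A, ∀ v,
      (A - μ • 1) *ᵥ ((A - μ • 1) *ᵥ v) = 0 → (A - μ • 1) *ᵥ v = 0) :
    ∃ (Q : Matrix n n K) (d : n → K), IsUnit Q ∧ A = Q * diagonal d * Q⁻¹ ∧
      ∀ k, d k ∈ spectrum K A := by
  set f : Module.End K (n → K) := toLin' A
  have hsub (μ : K) : f - μ • 1 = toLin' (A - μ • 1) := by simp [f, End.one_eq_id]
  have hspec {μ : K} : f.HasEigenvalue μ ↔ μ ∈ spectrum K A := by
    rw [End.hasEigenvalue_iff_mem_spectrum, spectrum_toLin']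
  have htop : ⨆ μ, f.eigenspace μ = ⊤ := by
    refine f.iSup_eigenspace_eq_top_of_ker_sq fun μ hμ v hv => ?_
    simp only [hsub, toLin'_apply] at hv ⊢
    exact h μ (hspec.1 hμ) v hv
  have hspan : ⊤ ≤ Submodule.span K (⋃ μ, (f.eigenspace μ : Set (n → K))) := by
    rw [← Submodule.iSup_eq_span, htop]
  let b₀ := Basis.ofSpan hspan
  let b := b₀.reindex (b₀.indexEquiv (Pi.basisFun K n))
  have hb (k : n) : b k ∈ ⋃ μ, (f.eigenspace μ : Set (n → K)) := by
    rw [Basis.reindex_apply]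
    exact Basis.ofSpan_subset hspan ⟨_, rfl⟩
  choose d hd using fun k => Set.mem_iUnion.1 (hb k)
  set Q := (Pi.basisFun K n).toMatrix b
  have hQ : IsUnit Q := by
    let := (Pi.basisFun K n).invertibleToMatrix b
    exact isUnit_of_invertible Q
  have hAQ : A * Q = Q * diagonal d := by
    have hQe (i k : n) : Q i k = b k i := by simp [Q, Basis.toMatrix_apply]
    ext i k
    have hk := congrFun (End.mem_eigenspace_iff.1 (hd k)) i
    simp only [f, toLin'_apply, mulVec, dotProduct, Pi.smul_apply, smul_eq_mul] at hk
    rw [mul_diagonal, mul_apply, hQe, mul_comm]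
    simpa only [hQe] using hk
  refine ⟨Q, d, hQ, ?_, fun k =>
    hspec.1 <| End.hasEigenvalue_of_hasEigenvector ⟨hd k, b.ne_zero k⟩⟩
  rw [← hAQ, Matrix.mul_nonsing_inv_cancel_right _ _ ((isUnit_iff_isUnit_det Q).1 hQ)]

theorem Matrix.exp_real_smul_conj_diagonal {n : Type*} [Fintype n] [DecidableEq n]
    {Q : Matrix n n ℂ} (hQ : IsUnit Q) (d : n → ℂ) (τ : ℝ) :
    exp (τ • (Q * diagonal d * Q⁻¹)) =
      Q * diagonal (fun k => Complex.exp (τ * d k)) * Q⁻¹ := by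
  have hdiag : (τ : ℂ) • diagonal d = diagonal fun k => (τ : ℂ) * d k := by
    rw [← diagonal_smul]; rfl
  rw [← Complex.coe_smul, ← Matrix.smul_mul, ← Matrix.mul_smul, hdiag, exp_conj Q _ hQ,
    exp_diagonal, Pi.exp_def]
  simp_rw [← Complex.exp_eq_exp_ℂ]

theorem Matrix.map_ofReal_exp_transpose_mul_exp {m : Type*} [Fintype m] [DecidableEq m]
    (M : Matrix m m ℝ) :
    (exp Mᵀ * exp M).map Complex.ofReal =
      (exp (M.map Complex.ofReal))ᵀ * exp (M.map Complex.ofReal) := by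
  have hexp (N : Matrix m m ℝ) :
      Complex.ofRealHom.mapMatrix (exp N) = exp (Complex.ofRealHom.mapMatrix N) :=
    open scoped Norms.Operator in
    map_exp _ (continuous_id.matrix_map Complex.continuous_ofReal) N
  change Complex.ofRealHom.mapMatrix (exp Mᵀ * exp M) = _
  rw [map_mul, hexp, hexp, ← exp_transpose]
  rfl

theorem Matrix.transpose_mul_self_mul_diagonal_mul_apply {α m : Type*} [CommRing α] [Fintype m]
    [DecidableEq m] (P R : Matrix m m α) (e : m → α) (i j : m) :
    ((P * diagonal e * R)ᵀ * (P * diagonal e * R)) i j =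
      ∑ k, ∑ l, R k i * (Pᵀ * P) k l * R l j * (e k * e l) := by
  have hentry (a b : m) : (P * diagonal e * R) a b = ∑ k, P a k * e k * R k b := by
    rw [mul_apply]; simp only [mul_diagonal]
  simp only [mul_apply, transpose_apply, hentry, Finset.sum_mul, Finset.mul_sum]
  conv_lhs => rw [Finset.sum_comm]; arg 2; ext l; rw [Finset.sum_comm]
  rw [Finset.sum_comm]
  exact Finset.sum_congr rfl fun k _ => Finset.sum_congr rfl fun l _ =>
    Finset.sum_congr rfl fun p _ => by ring

theorem Matrix.ofReal_exp_transpose_mul_exp_apply {n : Type*} [Fintype n] [DecidableEq n]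
    {F : Matrix n n ℝ} {Q : Matrix n n ℂ} {d : n → ℂ} (hQ : IsUnit Q)
    (hF : F.map Complex.ofReal = Q * diagonal d * Q⁻¹) (τ : ℝ) (i j : n) :
    (((exp (τ • Fᵀ) * exp (τ • F)) i j : ℝ) : ℂ) =
      ∑ p : n × n, Q⁻¹ p.1 i * (Qᵀ * Q) p.1 p.2 * Q⁻¹ p.2 j *
        Complex.exp (τ * (d p.1 + d p.2)) := by
  have hτF : (τ • F).map Complex.ofReal = τ • (Q * diagonal d * Q⁻¹) := by
    rw [← hF]; ext; simp
  rw [← map_apply (f := Complex.ofReal), ← transpose_smul, map_ofReal_exp_transpose_mul_exp,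
    hτF, exp_real_smul_conj_diagonal hQ, transpose_mul_self_mul_diagonal_mul_apply,
    Fintype.sum_prod_type]
  simp_rw [mul_add, Complex.exp_add]

/-- For F neutrally stable with all eigenvalues on the imaginary axis (purely imaginary,
semisimple spectrum), the Cesàro limit P = lim t⁻¹∫₀ᵗ exp(Fᵀτ)exp(Fτ)dτ exists. -/
theorem stmt7 {n : ℕ} (F : Matrix (Fin n) (Fin n) ℝ)
    (hspec : ∀ μ ∈ spectrum ℂ (F.map Complex.ofReal), μ.re = 0)
    (hsemisimple : ∀ μ ∈ spectrum ℂ (F.map Complex.ofReal),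
      ∀ v : Fin n → ℂ,
        (F.map Complex.ofReal - μ • 1) *ᵥ ((F.map Complex.ofReal - μ • 1) *ᵥ v) = 0 →
          (F.map Complex.ofReal - μ • 1) *ᵥ v = 0) :
    ∃ P : Matrix (Fin n) (Fin n) ℝ,
      Tendsto
        (fun t : ℝ => t⁻¹ • Matrix.of (fun i j =>
          ∫ τ in (0:ℝ)..t, (NormedSpace.exp (τ • Fᵀ) * NormedSpace.exp (τ • F)) i j))
        atTop (nhds P) := by
  obtain ⟨Q, d, hQ, hF, hd⟩ :=
    (F.map Complex.ofReal).exists_eq_conj_diagonal_of_ker_sq hsemisimple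
  have hlim (i j : Fin n) : ∃ L : ℝ,
      Tendsto (cesaroMean fun τ => (exp (τ • Fᵀ) * exp (τ • F)) i j) atTop (𝓝 L) :=
    ⟨_, Tendsto.cesaroMean_of_ofReal (by
      simp_rw [ofReal_exp_transpose_mul_exp_apply hQ hF]
      exact tendsto_cesaroMean_sum_mul_cexp _ _ fun p => by simp [hspec _ (hd _)])⟩
  choose P hP using hlim
  exact ⟨Matrix.of P, tendsto_pi_nhds.2 fun i => tendsto_pi_nhds.2 fun j => hP i j⟩
end
end

section
/- Let F ∈ ℝ^{n×n} be similar to a skew-symmetric matrix. Then P := lim_{t→∞} t^{-1} ∫₀ᵗ exp(Fᵀτ) exp(Fτ) dτ is symmetric positive definite. -/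
/-!
Conjugating by `T` gives `exp (τF) = T exp (τS) T⁻¹` with `exp (τS)` orthogonal, so
`|x|² ≤ K |exp (τF) x|²` for a constant `K > 0` independent of `τ` (built from the Frobenius norms
of `T` and `T⁻¹`). The quadratic form of `exp (τFᵀ) exp (τF)` is exactly `|exp (τF) x|²`, so the
bound survives Cesàro averaging and passes to the limit `P`, which is symmetric as a limit of
symmetric matrices.
-/

open Matrix NormedSpace Filter
open scoped Kronecker

noncomputable section

lemma le_of_tendsto_average {f : ℝ → ℝ} (hf : Continuous f) {c L : ℝ}
    (hc : ∀ τ, 0 ≤ τ → c ≤ f τ)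
    (hlim : Tendsto (fun t => t⁻¹ * ∫ τ in (0 : ℝ)..t, f τ) atTop (nhds L)) : c ≤ L := by
  refine ge_of_tendsto hlim ?_
  filter_upwards [eventually_gt_atTop 0] with t ht
  rw [le_inv_mul_iff₀ ht]
  simpa using intervalIntegral.integral_mono_on ht.le
    (intervalIntegrable_const (μ := MeasureTheory.volume)) (hf.intervalIntegrable 0 t)
    fun τ hτ => hc τ hτ.1

namespace Matrix

variable {ι κ : Type*}

lemma isSymm_of_tendsto_average {G : ℝ → Matrix ι ι ℝ} (hsymm : ∀ τ, (G τ)ᵀ = G τ)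
    {P : Matrix ι ι ℝ}
    (hlim : Tendsto (fun t : ℝ => t⁻¹ • of fun i j => ∫ τ in (0 : ℝ)..t, G τ i j)
      atTop (nhds P)) : P.IsSymm := by
  refine (isClosed_eq continuous_id.matrix_transpose continuous_id).mem_of_tendsto hlim
    (Eventually.of_forall fun t => ?_)
  ext i j
  simp only [id_eq, transpose_apply, smul_apply, of_apply]
  congr 1
  exact intervalIntegral.integral_congr fun τ _ => congrFun (congrFun (hsymm τ) i) j

variable [Fintype ι] [Fintype κ]

lemma dotProduct_transpose_mul_self_mulVec (A : Matrix κ ι ℝ) (x : ι → ℝ) :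
    x ⬝ᵥ (Aᵀ * A) *ᵥ x = (A *ᵥ x) ⬝ᵥ (A *ᵥ x) := by
  rw [← mulVec_mulVec, dotProduct_mulVec, vecMul_transpose]

lemma dotProduct_mulVec_self_le (A : Matrix κ ι ℝ) (v : ι → ℝ) :
    (A *ᵥ v) ⬝ᵥ (A *ᵥ v) ≤ (∑ i, ∑ j, A i j ^ 2) * (v ⬝ᵥ v) := by
  have hv : v ⬝ᵥ v = ∑ j, v j ^ 2 := by simp only [dotProduct, sq]
  rw [hv, Finset.sum_mul]
  simp only [dotProduct, mulVec, ← sq]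
  exact Finset.sum_le_sum fun i _ => Finset.sum_mul_sq_le_sq_mul_sq _ _ _

lemma exists_pos_dotProduct_le_mul_dotProduct_mulVec [DecidableEq ι] {A : Matrix ι ι ℝ}
    (hA : IsUnit A.det) :
    ∃ K > 0, ∀ v : ι → ℝ, v ⬝ᵥ v ≤ K * ((A *ᵥ v) ⬝ᵥ (A *ᵥ v)) := by
  set K := ∑ i, ∑ j, A⁻¹ i j ^ 2
  refine ⟨K + 1, by positivity, fun v => ?_⟩
  calc v ⬝ᵥ v = (A⁻¹ *ᵥ (A *ᵥ v)) ⬝ᵥ (A⁻¹ *ᵥ (A *ᵥ v)) := by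
        rw [mulVec_mulVec, nonsing_inv_mul _ hA, one_mulVec]
    _ ≤ K * ((A *ᵥ v) ⬝ᵥ (A *ᵥ v)) := dotProduct_mulVec_self_le _ _
    _ ≤ (K + 1) * ((A *ᵥ v) ⬝ᵥ (A *ᵥ v)) :=
        mul_le_mul_of_nonneg_right (le_add_of_nonneg_right zero_le_one)
          (by simpa using dotProduct_self_star_nonneg (A *ᵥ v))

lemma dotProduct_intervalIntegral_mulVec {G : ℝ → Matrix ι κ ℝ} (hG : Continuous G)
    (x : ι → ℝ) (y : κ → ℝ) (a b : ℝ) :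
    x ⬝ᵥ of (fun i j => ∫ τ in a..b, G τ i j) *ᵥ y = ∫ τ in a..b, x ⬝ᵥ G τ *ᵥ y := by
  have hentry (i : ι) (j : κ) : Continuous fun τ => G τ i j := by fun_prop
  simp only [dotProduct, mulVec, of_apply, Finset.mul_sum]
  rw [intervalIntegral.integral_finsetSum fun i _ =>
    (continuous_finsetSum _ fun j _ => by fun_prop).intervalIntegrable _ _]
  refine Finset.sum_congr rfl fun i _ => ?_
  rw [intervalIntegral.integral_finsetSum fun j _ =>
    (by fun_prop : Continuous _).intervalIntegrable _ _]
  simp only [← intervalIntegral.integral_const_mul, ← intervalIntegral.integral_mul_const]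

theorem posDef_of_tendsto_average {G : ℝ → Matrix ι ι ℝ} (hG : Continuous G)
    (hsymm : ∀ τ, (G τ)ᵀ = G τ) {K : ℝ} (hK : 0 < K)
    (hbound : ∀ τ, 0 ≤ τ → ∀ x, x ⬝ᵥ x ≤ K * (x ⬝ᵥ G τ *ᵥ x)) {P : Matrix ι ι ℝ}
    (hlim : Tendsto (fun t : ℝ => t⁻¹ • of fun i j => ∫ τ in (0 : ℝ)..t, G τ i j)
      atTop (nhds P)) : P.PosDef := by
  refine .of_dotProduct_mulVec_pos (isSymm_of_tendsto_average hsymm hlim) fun x hx => ?_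
  rw [star_trivial]
  have hquad : Tendsto (fun t : ℝ => t⁻¹ * ∫ τ in (0 : ℝ)..t, x ⬝ᵥ G τ *ᵥ x) atTop
      (nhds (x ⬝ᵥ P *ᵥ x)) := by
    refine ((Continuous.dotProduct continuous_const
      (continuous_id.matrix_mulVec continuous_const)).tendsto P).comp hlim |>.congr fun t => ?_
    simp only [Function.comp_apply, id_eq, smul_mulVec, dotProduct_smul, smul_eq_mul,
      dotProduct_intervalIntegral_mulVec hG]
  have hx : 0 < x ⬝ᵥ x := by simpa using dotProduct_self_star_pos_iff.mpr hx
  refine (div_pos hx hK).trans_le (le_of_tendsto_average (by fun_prop) (fun τ hτ => ?_) hquad)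
  rw [div_le_iff₀' hK]
  exact hbound τ hτ x

variable [DecidableEq ι]

section

attribute [local instance] Matrix.linftyOpNormedRing Matrix.linftyOpNormedAlgebra

lemma continuous_exp_smul (A : Matrix ι ι ℝ) : Continuous fun τ : ℝ => exp (τ • A) :=
  exp_continuous.comp (continuous_id.smul continuous_const)

end

lemma transpose_exp_mul_exp_of_transpose_eq_neg {S : Matrix ι ι ℝ} (hS : Sᵀ = -S) :
    (exp S)ᵀ * exp S = 1 := by
  rw [← exp_transpose, hS, exp_neg, nonsing_inv_mul _ ((isUnit_exp S).map detMonoidHom)]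

lemma exists_pos_dotProduct_le_mul_dotProduct_exp_smul_mulVec {F S T : Matrix ι ι ℝ}
    (hS : Sᵀ = -S) (hT : IsUnit T.det) (hF : F = T * S * T⁻¹) :
    ∃ K > 0, ∀ (τ : ℝ) (x : ι → ℝ),
      x ⬝ᵥ x ≤ K * ((exp (τ • F) *ᵥ x) ⬝ᵥ (exp (τ • F) *ᵥ x)) := by
  obtain ⟨K₁, hK₁, hT₁⟩ :=
    exists_pos_dotProduct_le_mul_dotProduct_mulVec (isUnit_nonsing_inv_det T hT)
  obtain ⟨K₂, hK₂, hT₂⟩ := exists_pos_dotProduct_le_mul_dotProduct_mulVec hT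
  refine ⟨K₁ * K₂, by positivity, fun τ x => ?_⟩
  have hexp : exp (τ • F) = T * exp (τ • S) * T⁻¹ := by
    rw [hF, ← exp_conj _ _ ((isUnit_iff_isUnit_det T).mpr hT), mul_smul_comm, smul_mul_assoc]
  have horth (v : ι → ℝ) : (exp (τ • S) *ᵥ v) ⬝ᵥ (exp (τ • S) *ᵥ v) = v ⬝ᵥ v := by
    have hτS : (τ • S)ᵀ = -(τ • S) := by rw [transpose_smul, hS, smul_neg]
    rw [← dotProduct_transpose_mul_self_mulVec, transpose_exp_mul_exp_of_transpose_eq_neg hτS,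
      one_mulVec]
  calc x ⬝ᵥ x ≤ K₁ * ((T⁻¹ *ᵥ x) ⬝ᵥ (T⁻¹ *ᵥ x)) := hT₁ x
    _ = K₁ * ((exp (τ • S) *ᵥ T⁻¹ *ᵥ x) ⬝ᵥ (exp (τ • S) *ᵥ T⁻¹ *ᵥ x)) := by rw [horth]
    _ ≤ K₁ * (K₂ * ((exp (τ • F) *ᵥ x) ⬝ᵥ (exp (τ • F) *ᵥ x))) := by
        rw [hexp, ← mulVec_mulVec, ← mulVec_mulVec]
        exact mul_le_mul_of_nonneg_left (hT₂ _) hK₁.le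
    _ = K₁ * K₂ * ((exp (τ • F) *ᵥ x) ⬝ᵥ (exp (τ • F) *ᵥ x)) := (mul_assoc _ _ _).symm

end Matrix

/-- If F is similar to a skew-symmetric matrix and the Cesàro limit P of
exp(Fᵀτ)exp(Fτ) exists, then P is symmetric positive definite. -/
theorem stmt8 {n : ℕ} (F S T : Matrix (Fin n) (Fin n) ℝ)
    (hS : Sᵀ = -S) (hT : IsUnit T.det) (hF : F = T * S * T⁻¹)
    (P : Matrix (Fin n) (Fin n) ℝ)
    (hlim : Tendsto
      (fun t : ℝ => t⁻¹ • Matrix.of (fun i j =>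
        ∫ τ in (0:ℝ)..t, (NormedSpace.exp (τ • Fᵀ) * NormedSpace.exp (τ • F)) i j))
      atTop (nhds P)) :
    P.PosDef := by
  obtain ⟨K, hK, hbound⟩ := exists_pos_dotProduct_le_mul_dotProduct_exp_smul_mulVec hS hT hF
  have hexp_transpose (τ : ℝ) : exp (τ • Fᵀ) = (exp (τ • F))ᵀ := by
    rw [← transpose_smul, exp_transpose]
  refine posDef_of_tendsto_average
    ((continuous_exp_smul Fᵀ).matrix_mul (continuous_exp_smul F)) (fun τ => ?_) hK
    (fun τ _ x => ?_) hlim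
  · rw [transpose_mul, hexp_transpose, transpose_transpose]
  · rw [hexp_transpose, dotProduct_transpose_mul_self_mulVec]
    exact hbound τ x
end
end

section
/- Let F ∈ ℝ^{n×n} be similar to a skew-symmetric matrix and suppose P := lim_{t→∞} t^{-1} ∫₀ᵗ exp(Fᵀτ) exp(Fτ) dτ exists. Then PF + FᵀP = 0. -/
open Matrix NormedSpace Filter
open scoped Kronecker

noncomputable section

/-! Put `G τ = exp (τ • Fᵀ) * exp (τ • F)`, so that `G' = Fᵀ * G + G * F`. Integrating, the Cesàro
mean `Mₜ` of `G` satisfies `Fᵀ * Mₜ + Mₜ * F = t⁻¹ • (G t - 1)`. Since `F = T S T⁻¹` with `S`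
skew-symmetric, `exp (τ • S)` is orthogonal and `G` stays bounded, so the right-hand side tends
to `0`, and in the limit `Fᵀ * P + P * F = 0`. -/

open Topology

theorem ContinuousLinearMap.map_eq_zero_of_tendsto_cesaro
    {E : Type*} [NormedAddCommGroup E] [NormedSpace ℝ E] [CompleteSpace E]
    {G : ℝ → E} {L : E →L[ℝ] E} (hG : ∀ τ, HasDerivAt G (L (G τ)) τ)
    (hbdd : IsBoundedUnder (· ≤ ·) atTop (‖G ·‖)) {P : E}
    (hP : Tendsto (fun t : ℝ => t⁻¹ • ∫ τ in (0:ℝ)..t, G τ) atTop (𝓝 P)) :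
    L P = 0 := by
  have hcont : Continuous G := continuous_iff_continuousAt.2 fun τ => (hG τ).continuousAt
  have hmean (t : ℝ) : L (t⁻¹ • ∫ τ in (0:ℝ)..t, G τ) = t⁻¹ • G t - t⁻¹ • G 0 := by
    rw [map_smul, ← L.intervalIntegral_comp_comm (hcont.intervalIntegrable _ _),
      intervalIntegral.integral_eq_sub_of_hasDerivAt (fun τ _ => hG τ)
        ((L.continuous.comp hcont).intervalIntegrable _ _), smul_sub]
  have hvanish : Tendsto (fun t : ℝ => t⁻¹ • G t - t⁻¹ • G 0) atTop (𝓝 0) := by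
    simpa using (tendsto_inv_atTop_zero.zero_smul_isBoundedUnder_le hbdd).sub
      (tendsto_inv_atTop_zero.smul_const (G 0))
  exact tendsto_nhds_unique ((L.continuous.tendsto P).comp hP)
    (by simpa only [Function.comp_def, hmean])

section L2OpNorm

-- With the L² operator norm, matrices form a C⋆-algebra, where orthogonal factors are isometries.

open scoped Matrix.Norms.L2Operator

variable {m : Type*} [Fintype m] [DecidableEq m]

theorem Matrix.intervalIntegral_apply {G : ℝ → Matrix m m ℝ} {a b : ℝ}
    (hG : IntervalIntegrable G MeasureTheory.volume a b) (i j : m) :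
    (∫ τ in a..b, G τ) i j = ∫ τ in a..b, G τ i j :=
  ((entryLinearMap ℝ ℝ i j).toContinuousLinearMap.intervalIntegral_comp_comm hG).symm

theorem Matrix.norm_exp_smul_conj_le {S T : Matrix m m ℝ} (hS : Sᵀ = -S) (hT : IsUnit T.det)
    (t : ℝ) : ‖exp (t • (T * S * T⁻¹))‖ ≤ ‖T‖ * ‖T⁻¹‖ := by
  have hskew : t • S ∈ skewAdjoint (Matrix m m ℝ) := by
    rw [skewAdjoint.mem_iff, star_eq_conjTranspose, conjTranspose_eq_transpose_of_trivial,
      transpose_smul, hS, smul_neg]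
  rw [← smul_mul_assoc, ← mul_smul_comm, exp_conj _ _ ((isUnit_iff_isUnit_det T).2 hT)]
  calc ‖T * exp (t • S) * T⁻¹‖ ≤ ‖T * exp (t • S)‖ * ‖T⁻¹‖ := norm_mul_le _ _
    _ = ‖T‖ * ‖T⁻¹‖ := by
      -- `exp_mem_unitary_of_mem_skewAdjoint` is stated for normed `ℚ`-algebras.
      let : NormedAlgebra ℚ (Matrix m m ℝ) := NormedAlgebra.restrictScalars ℚ ℝ _
      rw [CStarRing.norm_mul_mem_unitary _ (exp_mem_unitary_of_mem_skewAdjoint hskew)]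

theorem Matrix.hasDerivAt_exp_smul_transpose_mul_exp_smul (F : Matrix m m ℝ) (τ : ℝ) :
    HasDerivAt (fun τ : ℝ => exp (τ • Fᵀ) * exp (τ • F))
      (Fᵀ * (exp (τ • Fᵀ) * exp (τ • F)) + exp (τ • Fᵀ) * exp (τ • F) * F) τ := by
  have h := (hasDerivAt_exp_smul_const' Fᵀ τ).mul (hasDerivAt_exp_smul_const F τ)
  simp only [mul_assoc] at h ⊢
  exact h

theorem Matrix.transpose_mul_add_mul_eq_zero_of_tendsto_cesaro {F S T P : Matrix m m ℝ}
    (hS : Sᵀ = -S) (hT : IsUnit T.det) (hF : F = T * S * T⁻¹)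
    (hP : Tendsto (fun t : ℝ => t⁻¹ • ∫ τ in (0:ℝ)..t, exp (τ • Fᵀ) * exp (τ • F)) atTop (𝓝 P)) :
    Fᵀ * P + P * F = 0 := by
  let L : Matrix m m ℝ →L[ℝ] Matrix m m ℝ :=
    ContinuousLinearMap.mul ℝ _ Fᵀ + (ContinuousLinearMap.mul ℝ _).flip F
  have hbdd : IsBoundedUnder (· ≤ ·) atTop fun τ : ℝ => ‖exp (τ • Fᵀ) * exp (τ • F)‖ := by
    refine isBoundedUnder_of ⟨(‖T‖ * ‖T⁻¹‖) ^ 2, fun τ => ?_⟩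
    have hexp := hF ▸ norm_exp_smul_conj_le hS hT τ
    calc ‖exp (τ • Fᵀ) * exp (τ • F)‖ ≤ ‖(exp (τ • F))ᵀ‖ * ‖exp (τ • F)‖ := by
          rw [← transpose_smul, exp_transpose]; exact norm_mul_le _ _
      _ = ‖exp (τ • F)‖ ^ 2 := by
          rw [← conjTranspose_eq_transpose_of_trivial, ← star_eq_conjTranspose, norm_star, sq]
      _ ≤ (‖T‖ * ‖T⁻¹‖) ^ 2 := by gcongr
  exact L.map_eq_zero_of_tendsto_cesaro (hasDerivAt_exp_smul_transpose_mul_exp_smul F) hbdd hP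

end L2OpNorm

/-- If F is similar to a skew-symmetric matrix and the Cesàro limit P of
exp(Fᵀτ)exp(Fτ) exists, then PF + FᵀP = 0. -/
theorem stmt9 {n : ℕ} (F S T : Matrix (Fin n) (Fin n) ℝ)
    (hS : Sᵀ = -S) (hT : IsUnit T.det) (hF : F = T * S * T⁻¹)
    (P : Matrix (Fin n) (Fin n) ℝ)
    (hlim : Tendsto
      (fun t : ℝ => t⁻¹ • Matrix.of (fun i j =>
        ∫ τ in (0:ℝ)..t, (NormedSpace.exp (τ • Fᵀ) * NormedSpace.exp (τ • F)) i j))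
      atTop (nhds P)) :
    P * F + Fᵀ * P = 0 := by
  open scoped Matrix.Norms.L2Operator in
  have hcont : Continuous fun τ : ℝ => exp (τ • Fᵀ) * exp (τ • F) := continuous_iff_continuousAt.2
    fun τ => (hasDerivAt_exp_smul_transpose_mul_exp_smul F τ).continuousAt
  open scoped Matrix.Norms.L2Operator in
  have hP : Tendsto (fun t : ℝ => t⁻¹ • ∫ τ in (0:ℝ)..t, exp (τ • Fᵀ) * exp (τ • F))
      atTop (𝓝 P) := by
    convert hlim using 3 with t
    ext i j
    exact intervalIntegral_apply (hcont.intervalIntegrable _ _) i j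
  rw [add_comm]
  exact transpose_mul_add_mul_eq_zero_of_tendsto_cesaro hS hT hF hP
end
end

section
/- If F ∈ ℝ^{n×n} is similar to a skew-symmetric matrix, then there exist constants 0 < a ≤ b such that a·I ≤ exp(Fᵀt)·exp(Ft) ≤ b·I (in the positive semidefinite order) for all real t. -/
/-!
Conjugating, `exp (t F) = T Q T⁻¹` with `Q = exp (t S)` orthogonal, since `exp (t S)ᵀ = exp (-t S)`.
An orthogonal `Q` preserves the Euclidean norm, so by Cauchy–Schwarz `‖T Q T⁻¹ v‖² ≤ K ‖v‖²`
with `K` the product of the squared Frobenius norms of `T` and `T⁻¹`, independently of `Q`.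
Applied to the inverse `T Qᵀ T⁻¹` this gives `‖v‖² ≤ K ‖T Q T⁻¹ v‖²`, and the two quadratic-form
bounds are the claimed Loewner bounds with `a = K⁻¹`, `b = K`.
-/

open Matrix NormedSpace

namespace Matrix

variable {m n : Type*} [Fintype m] [Fintype n]

theorem dotProduct_mulVec_self_le_sum_sq (M : Matrix m n ℝ) (v : n → ℝ) :
    (M *ᵥ v) ⬝ᵥ (M *ᵥ v) ≤ (∑ i, ∑ j, M i j ^ 2) * (v ⬝ᵥ v) := by
  simp only [dotProduct, mulVec, ← sq]
  rw [Finset.sum_mul]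
  exact Finset.sum_le_sum fun i _ => Finset.sum_mul_sq_le_sq_mul_sq _ _ _

theorem dotProduct_transpose_mul_self_mulVec_s10 (M : Matrix m n ℝ) (v : n → ℝ) :
    v ⬝ᵥ ((Mᵀ * M) *ᵥ v) = (M *ᵥ v) ⬝ᵥ (M *ᵥ v) := by
  rw [← mulVec_mulVec, dotProduct_mulVec, vecMul_transpose]

variable [DecidableEq n]

theorem posSemidef_transpose_mul_self_sub_smul_one_iff (M : Matrix n n ℝ) (c : ℝ) :
    (Mᵀ * M - c • 1).PosSemidef ↔ ∀ v, c * (v ⬝ᵥ v) ≤ (M *ᵥ v) ⬝ᵥ (M *ᵥ v) := by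
  simp [posSemidef_iff_dotProduct_mulVec, (isSymm_transpose_mul_self M).sub (isSymm_one.smul c),
    sub_mulVec, smul_mulVec, dotProduct_transpose_mul_self_mulVec_s10]

theorem posSemidef_smul_one_sub_transpose_mul_self_iff (M : Matrix n n ℝ) (c : ℝ) :
    (c • 1 - Mᵀ * M).PosSemidef ↔ ∀ v, (M *ᵥ v) ⬝ᵥ (M *ᵥ v) ≤ c * (v ⬝ᵥ v) := by
  simp [posSemidef_iff_dotProduct_mulVec, (isSymm_one.smul c).sub (isSymm_transpose_mul_self M),
    sub_mulVec, smul_mulVec, dotProduct_transpose_mul_self_mulVec_s10]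

theorem transpose_mul_self_exp_of_transpose_eq_neg {S : Matrix n n ℝ} (hS : Sᵀ = -S) :
    (exp S)ᵀ * exp S = 1 := by
  rw [← exp_transpose, hS, ← exp_add_of_commute _ _ (Commute.refl S).neg_left, neg_add_cancel,
    exp_zero]

theorem dotProduct_mulVec_conj_le (T T' Q : Matrix n n ℝ) (hQ : Qᵀ * Q = 1) (v : n → ℝ) :
    ((T * Q * T') *ᵥ v) ⬝ᵥ ((T * Q * T') *ᵥ v) ≤
      (∑ i, ∑ j, T i j ^ 2) * (∑ i, ∑ j, T' i j ^ 2) * (v ⬝ᵥ v) := calc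
  _ ≤ (∑ i, ∑ j, T i j ^ 2) * ((Q *ᵥ (T' *ᵥ v)) ⬝ᵥ (Q *ᵥ (T' *ᵥ v))) := by
    rw [← mulVec_mulVec, ← mulVec_mulVec]
    exact dotProduct_mulVec_self_le_sum_sq _ _
  _ = (∑ i, ∑ j, T i j ^ 2) * ((T' *ᵥ v) ⬝ᵥ (T' *ᵥ v)) := by
    rw [← dotProduct_transpose_mul_self_mulVec_s10, hQ, one_mulVec]
  _ ≤ _ := by
    rw [mul_assoc]
    gcongr
    exact dotProduct_mulVec_self_le_sum_sq _ _

theorem exists_bounds_transpose_mul_self_conj_orthogonal (T : Matrix n n ℝ)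
    (hT : IsUnit T.det) : ∃ a b : ℝ, 0 < a ∧ a ≤ b ∧ ∀ Q : Matrix n n ℝ, Qᵀ * Q = 1 →
      ((T * Q * T⁻¹)ᵀ * (T * Q * T⁻¹) - a • 1).PosSemidef ∧
      (b • 1 - (T * Q * T⁻¹)ᵀ * (T * Q * T⁻¹)).PosSemidef := by
  set K := max ((∑ i, ∑ j, T i j ^ 2) * (∑ i, ∑ j, T⁻¹ i j ^ 2)) 1
  have hK : 1 ≤ K := le_max_right _ _
  have hle : ∀ Q : Matrix n n ℝ, Qᵀ * Q = 1 → ∀ v,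
      ((T * Q * T⁻¹) *ᵥ v) ⬝ᵥ ((T * Q * T⁻¹) *ᵥ v) ≤ K * (v ⬝ᵥ v) := fun Q hQ v =>
    (dotProduct_mulVec_conj_le T T⁻¹ Q hQ v).trans <|
      mul_le_mul_of_nonneg_right (le_max_left _ _) (dotProduct_star_self_nonneg v)
  refine ⟨K⁻¹, K, by positivity, (inv_le_one_of_one_le₀ hK).trans hK, fun Q hQ => ⟨?_, ?_⟩⟩
  · rw [posSemidef_transpose_mul_self_sub_smul_one_iff]
    intro v
    have hQT : Qᵀᵀ * Qᵀ = 1 := by rw [transpose_transpose, mul_eq_one_comm, hQ]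
    have hinv : (T * Qᵀ * T⁻¹) *ᵥ ((T * Q * T⁻¹) *ᵥ v) = v := by
      simp [mulVec_mulVec, Matrix.mul_assoc, nonsing_inv_mul_cancel_left _ _ hT,
        ← Matrix.mul_assoc Qᵀ, hQ, mul_nonsing_inv _ hT]
    rw [inv_mul_le_iff₀ (by positivity)]
    simpa only [hinv] using hle Qᵀ hQT ((T * Q * T⁻¹) *ᵥ v)
  · exact (posSemidef_smul_one_sub_transpose_mul_self_iff _ _).2 (hle Q hQ)

end Matrix

/-- If F is similar to a skew-symmetric matrix, then a·I ≤ exp(Fᵀt)exp(Ft) ≤ b·I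
for some 0 < a ≤ b and all real t. -/
theorem stmt10 {n : ℕ} (F S T : Matrix (Fin n) (Fin n) ℝ)
    (hS : Sᵀ = -S) (hT : IsUnit T.det) (hF : F = T * S * T⁻¹) :
    ∃ a b : ℝ, 0 < a ∧ a ≤ b ∧ ∀ t : ℝ,
      (NormedSpace.exp (t • Fᵀ) * NormedSpace.exp (t • F) - a • 1).PosSemidef ∧
      (b • 1 - NormedSpace.exp (t • Fᵀ) * NormedSpace.exp (t • F)).PosSemidef := by
  obtain ⟨a, b, ha, hab, hbounds⟩ := exists_bounds_transpose_mul_self_conj_orthogonal T hT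
  refine ⟨a, b, ha, hab, fun t => ?_⟩
  have hexp : exp (t • F) = T * exp (t • S) * T⁻¹ := by
    rw [hF, ← exp_conj _ _ ((isUnit_iff_isUnit_det T).2 hT), Matrix.mul_smul, Matrix.smul_mul]
  have hskew : (t • S)ᵀ = -(t • S) := by rw [transpose_smul, hS, smul_neg]
  rw [← transpose_smul, exp_transpose, hexp]
  exact hbounds _ (transpose_mul_self_exp_of_transpose_eq_neg hskew)
end

section
/- Let S be skew-symmetric, H ∈ ℝ^{m×n}, Γ ∈ ℝ^{p×p} with Γ𝟙 = 0 and rᵀΓ = 0, rᵀ𝟙 = 1, and let P̂ := (I − 𝟙rᵀ)ᵀP(I − 𝟙rᵀ) with ΓᵀP̂ + P̂Γ = −Q̂, Q̂ := (I − 𝟙rᵀ)ᵀQ(I − 𝟙rᵀ), Q positive definite. Then along solutions of ẋ = (I_p ⊗ S + Γ ⊗ HᵀH)x, the function V(x) := xᵀ(P̂ ⊗ I_n)x satisfies V̇(x) = −xᵀ(Q̂ ⊗ HᵀH)x ≤ 0. -/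
/-!
Along a linear flow `ẋ = A x` the quadratic form `xᵀ B x` has derivative `xᵀ (AᵀB + BA) x`.
For `A = I ⊗ S + Γ ⊗ HᵀH` and `B = P̂ ⊗ I` the skew-symmetry of `S` cancels the `I ⊗ S` part,
leaving `(ΓᵀP̂ + P̂Γ) ⊗ HᵀH = -(Q̂ ⊗ HᵀH)`. This is negative semidefinite because
`Q̂ = MᵀQM` (with `M = I - 𝟙rᵀ`) and `HᵀH` are positive semidefinite, hence so is their
Kronecker product.
-/

open Matrix NormedSpace Filter
open scoped Kronecker

noncomputable section

section Derivatives

variable {𝕜 : Type*} [NontriviallyNormedField 𝕜] {ι κ : Type*} [Fintype ι]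
  {u v : 𝕜 → ι → 𝕜} {u' v' : ι → 𝕜} {t : 𝕜}

theorem HasDerivAt.dotProduct (hu : HasDerivAt u u' t) (hv : HasDerivAt v v' t) :
    HasDerivAt (fun s => u s ⬝ᵥ v s) (u' ⬝ᵥ v t + u t ⬝ᵥ v') t :=
  (HasDerivAt.fun_sum fun i _ => (hasDerivAt_pi.1 hu i).fun_mul (hasDerivAt_pi.1 hv i))
    |>.congr_deriv Finset.sum_add_distrib

theorem HasDerivAt.mulVec (B : Matrix κ ι 𝕜) (hu : HasDerivAt u u' t) :
    HasDerivAt (fun s => B *ᵥ u s) (B *ᵥ u') t :=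
  hasDerivAt_pi.2 fun i => (hasDerivAt_const t (B i)).dotProduct hu
    |>.congr_deriv (by rw [zero_dotProduct, zero_add]; rfl)

end Derivatives

theorem Matrix.neg_kronecker {R l m n p : Type*} [Ring R] (A : Matrix l m R) (B : Matrix n p R) :
    (-A) ⊗ₖ B = -(A ⊗ₖ B) := by
  ext; simp [neg_mul]

def lyapunovOp {R ι : Type*} [Semiring R] [Fintype ι] (A B : Matrix ι ι R) : Matrix ι ι R :=
  Aᵀ * B + B * A

theorem HasDerivAt.dotProduct_mulVec_of_linear {𝕜 ι : Type*} [NontriviallyNormedField 𝕜]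
    [Fintype ι] {A : Matrix ι ι 𝕜} (B : Matrix ι ι 𝕜) {x : 𝕜 → ι → 𝕜} {t : 𝕜}
    (hx : HasDerivAt x (A *ᵥ x t) t) :
    HasDerivAt (fun s => x s ⬝ᵥ (B *ᵥ x s)) (x t ⬝ᵥ (lyapunovOp A B *ᵥ x t)) t := by
  refine (hx.dotProduct (hx.mulVec B)).congr_deriv ?_
  rw [lyapunovOp, add_mulVec, dotProduct_add, ← mulVec_mulVec, ← mulVec_mulVec,
    dotProduct_mulVec (x t) Aᵀ, vecMul_transpose]

theorem lyapunovOp_kronecker {R p n : Type*} [CommRing R] [Fintype p] [DecidableEq p]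
    [Fintype n] [DecidableEq n] {S K : Matrix n n R} (hS : Sᵀ = -S) (hK : Kᵀ = K)
    (Γ P : Matrix p p R) :
    lyapunovOp (1 ⊗ₖ S + Γ ⊗ₖ K) (P ⊗ₖ 1) = lyapunovOp Γ P ⊗ₖ K := by
  simp only [lyapunovOp, transpose_add, ← kroneckerMap_transpose, transpose_one, hK,
    add_mul, mul_add, ← mul_kronecker_mul, Matrix.one_mul, Matrix.mul_one, add_kronecker]
  rw [add_add_add_comm, ← kronecker_add, hS, neg_add_cancel, kronecker_zero, zero_add]

theorem stmt12_general {p n m : ℕ} (S : Matrix (Fin n) (Fin n) ℝ) (hS : Sᵀ = -S)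
    (H : Matrix (Fin m) (Fin n) ℝ) (Γ : Matrix (Fin p) (Fin p) ℝ) (r : Fin p → ℝ)
    (P Q : Matrix (Fin p) (Fin p) ℝ) (hQ : Q.PosDef)
    (hlyap :
      Γᵀ * ((1 - vecMulVec (ones p) r)ᵀ * P * (1 - vecMulVec (ones p) r)) +
          ((1 - vecMulVec (ones p) r)ᵀ * P * (1 - vecMulVec (ones p) r)) * Γ =
        -((1 - vecMulVec (ones p) r)ᵀ * Q * (1 - vecMulVec (ones p) r)))
    (x : ℝ → Fin p × Fin n → ℝ)
    (hx : ∀ t, HasDerivAt x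
      (((1 : Matrix (Fin p) (Fin p) ℝ) ⊗ₖ S + Γ ⊗ₖ (Hᵀ * H)) *ᵥ x t) t)
    (t : ℝ) :
    HasDerivAt
      (fun s => x s ⬝ᵥ
        ((((1 - vecMulVec (ones p) r)ᵀ * P * (1 - vecMulVec (ones p) r)) ⊗ₖ
          (1 : Matrix (Fin n) (Fin n) ℝ)) *ᵥ x s))
      (-(x t ⬝ᵥ
        ((((1 - vecMulVec (ones p) r)ᵀ * Q * (1 - vecMulVec (ones p) r)) ⊗ₖ (Hᵀ * H)) *ᵥ x t)))
      t ∧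
    -(x t ⬝ᵥ
      ((((1 - vecMulVec (ones p) r)ᵀ * Q * (1 - vecMulVec (ones p) r)) ⊗ₖ (Hᵀ * H)) *ᵥ x t)) ≤ 0 := by
  set M := 1 - vecMulVec (ones p) r
  have hV := (hx t).dotProduct_mulVec_of_linear ((Mᵀ * P * M) ⊗ₖ 1)
  rw [lyapunovOp_kronecker hS (by rw [transpose_mul, transpose_transpose]), lyapunovOp, hlyap,
    neg_kronecker, neg_mulVec, dotProduct_neg] at hV
  have hQhat : (Mᵀ * Q * M).PosSemidef := by
    simpa using hQ.posSemidef.conjTranspose_mul_mul_same M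
  refine ⟨hV, neg_nonpos.2 ?_⟩
  simpa using (hQhat.kronecker (posSemidef_conjTranspose_mul_self H)).dotProduct_mulVec_nonneg (x t)

/-- Along solutions of ẋ = (I_p ⊗ S + Γ ⊗ HᵀH)x, the Lyapunov function
V(x) = xᵀ(P̂ ⊗ I_n)x satisfies V̇(x) = −xᵀ(Q̂ ⊗ HᵀH)x ≤ 0. -/
theorem stmt12 {p n m : ℕ} (S : Matrix (Fin n) (Fin n) ℝ) (hS : Sᵀ = -S)
    (H : Matrix (Fin m) (Fin n) ℝ) (Γ : Matrix (Fin p) (Fin p) ℝ) (r : Fin p → ℝ)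
    (hΓ1 : Γ *ᵥ ones p = 0) (hrΓ : r ᵥ* Γ = 0) (hr1 : ∑ i, r i = 1)
    (P Q : Matrix (Fin p) (Fin p) ℝ) (hQ : Q.PosDef)
    (hlyap :
      Γᵀ * ((1 - vecMulVec (ones p) r)ᵀ * P * (1 - vecMulVec (ones p) r)) +
          ((1 - vecMulVec (ones p) r)ᵀ * P * (1 - vecMulVec (ones p) r)) * Γ =
        -((1 - vecMulVec (ones p) r)ᵀ * Q * (1 - vecMulVec (ones p) r)))
    (x : ℝ → Fin p × Fin n → ℝ)
    (hx : ∀ t, HasDerivAt x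
      (((1 : Matrix (Fin p) (Fin p) ℝ) ⊗ₖ S + Γ ⊗ₖ (Hᵀ * H)) *ᵥ x t) t)
    (t : ℝ) :
    HasDerivAt
      (fun s => x s ⬝ᵥ
        ((((1 - vecMulVec (ones p) r)ᵀ * P * (1 - vecMulVec (ones p) r)) ⊗ₖ
          (1 : Matrix (Fin n) (Fin n) ℝ)) *ᵥ x s))
      (-(x t ⬝ᵥ
        ((((1 - vecMulVec (ones p) r)ᵀ * Q * (1 - vecMulVec (ones p) r)) ⊗ₖ (Hᵀ * H)) *ᵥ x t)))
      t ∧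
    -(x t ⬝ᵥ
      ((((1 - vecMulVec (ones p) r)ᵀ * Q * (1 - vecMulVec (ones p) r)) ⊗ₖ (Hᵀ * H)) *ᵥ x t)) ≤ 0 :=
  stmt12_general S hS H Γ r P Q hQ hlyap x hx t
end
end

section
/- Let x solve ẋ = (I_p ⊗ S + Γ ⊗ HᵀH)x with rᵀΓ = 0. Then (𝟙rᵀ ⊗ I_n)x(t) = (𝟙rᵀ ⊗ exp(St))x(0) for all t ≥ 0. -/
open Matrix NormedSpace Filter
open scoped Kronecker

noncomputable section

/-
The key identity `(𝟙rᵀ ⊗ I)(I ⊗ S + Γ ⊗ HᵀH) = (I ⊗ S)(𝟙rᵀ ⊗ I)` shows that `y := (𝟙rᵀ ⊗ I) x`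
solves the decoupled system `ẏ = (I ⊗ S) y`. So does `t ↦ (𝟙rᵀ ⊗ exp(tS)) x(0)`, with the same
initial value, and solutions of a linear ODE are unique.
-/

-- Any matrix norm does: it is only used to differentiate `exp`, which depends on the topology alone.
attribute [local instance] Matrix.linftyOpNormedRing Matrix.linftyOpNormedAlgebra

namespace Matrix

variable {ι κ : Type*} [Fintype ι] [Fintype κ]

theorem kronecker_one_mul_one_kronecker_add_kronecker [DecidableEq ι] [DecidableEq κ]
    {R : Type*} [CommSemiring R]
    {K Γ : Matrix ι ι R} (hKΓ : K * Γ = 0) (S G : Matrix κ κ R) :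
    (K ⊗ₖ (1 : Matrix κ κ R)) * ((1 : Matrix ι ι R) ⊗ₖ S + Γ ⊗ₖ G) =
      ((1 : Matrix ι ι R) ⊗ₖ S) * (K ⊗ₖ (1 : Matrix κ κ R)) := by
  rw [mul_add, ← mul_kronecker_mul, ← mul_kronecker_mul, ← mul_kronecker_mul, hKΓ,
    zero_kronecker, add_zero, mul_one, one_mul, one_mul, mul_one]

theorem eq_of_hasDerivAt_mulVec (B : Matrix ι ι ℝ) {f g : ℝ → ι → ℝ}
    (hf : ∀ t, HasDerivAt f (B *ᵥ f t) t) (hg : ∀ t, HasDerivAt g (B *ᵥ g t) t) {t₀ : ℝ}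
    (h : f t₀ = g t₀) : f = g :=
  ODE_solution_unique_univ (v := fun _ => (mulVecLin B).toContinuousLinearMap)
    (s := fun _ => Set.univ)
    (fun _ => (mulVecLin B).toContinuousLinearMap.lipschitz.lipschitzOnWith)
    (fun t => ⟨hf t, trivial⟩) (fun t => ⟨hg t, trivial⟩) h

theorem _root_.HasDerivAt.mulVec_of_mul_eq {B C M : Matrix ι ι ℝ} (hMC : M * C = B * M)
    {x : ℝ → ι → ℝ} {t : ℝ} (hx : HasDerivAt x (C *ᵥ x t) t) :
    HasDerivAt (fun s => M *ᵥ x s) (B *ᵥ (M *ᵥ x t)) t := by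
  have h : HasDerivAt (fun s => M *ᵥ x s) (M *ᵥ (C *ᵥ x t)) t :=
    (mulVecLin M).toContinuousLinearMap.hasFDerivAt.comp_hasDerivAt t hx
  rwa [mulVec_mulVec, hMC, ← mulVec_mulVec] at h

theorem hasDerivAt_kronecker_exp_smul_mulVec [DecidableEq ι] [DecidableEq κ]
    (K : Matrix ι ι ℝ) (S : Matrix κ κ ℝ) (v : ι × κ → ℝ) (t : ℝ) :
    HasDerivAt (fun s => (K ⊗ₖ exp (s • S)) *ᵥ v)
      (((1 : Matrix ι ι ℝ) ⊗ₖ S) *ᵥ ((K ⊗ₖ exp (t • S)) *ᵥ v)) t := by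
  let L : Matrix κ κ ℝ →ₗ[ℝ] ι × κ → ℝ :=
    { toFun := fun A => (K ⊗ₖ A) *ᵥ v
      map_add' := fun A A' => by simp only [kronecker_add, add_mulVec]
      map_smul' := fun c A => by simp only [kronecker_smul, smul_mulVec, RingHom.id_apply] }
  have h : HasDerivAt (fun s => L (exp (s • S))) (L (S * exp (t • S))) t :=
    L.toContinuousLinearMap.hasFDerivAt.comp_hasDerivAt t (hasDerivAt_exp_smul_const' S t)
  refine h.congr_deriv ?_
  change (K ⊗ₖ (S * exp (t • S))) *ᵥ v = _
  rw [mulVec_mulVec, ← mul_kronecker_mul, one_mul]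

end Matrix

/-- If x solves ẋ = (I_p ⊗ S + Γ ⊗ HᵀH)x and rᵀΓ = 0, then
(𝟙rᵀ ⊗ I_n)x(t) = (𝟙rᵀ ⊗ exp(St))x(0) for all t ≥ 0. -/
theorem stmt14 {p n m : ℕ} (S : Matrix (Fin n) (Fin n) ℝ)
    (H : Matrix (Fin m) (Fin n) ℝ) (Γ : Matrix (Fin p) (Fin p) ℝ) (r : Fin p → ℝ)
    (hrΓ : r ᵥ* Γ = 0)
    (x : ℝ → Fin p × Fin n → ℝ)
    (hx : ∀ t, HasDerivAt x
      (((1 : Matrix (Fin p) (Fin p) ℝ) ⊗ₖ S + Γ ⊗ₖ (Hᵀ * H)) *ᵥ x t) t) :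
    ∀ t : ℝ, 0 ≤ t →
      (vecMulVec (ones p) r ⊗ₖ (1 : Matrix (Fin n) (Fin n) ℝ)) *ᵥ x t =
        (vecMulVec (ones p) r ⊗ₖ NormedSpace.exp (t • S)) *ᵥ x 0 := by
  intro t _
  have hKΓ : vecMulVec (ones p) r * Γ = 0 := by rw [vecMulVec_mul, hrΓ, vecMulVec_zero]
  have hkey := kronecker_one_mul_one_kronecker_add_kronecker hKΓ S (Hᵀ * H)
  have hinit : (vecMulVec (ones p) r ⊗ₖ (1 : Matrix (Fin n) (Fin n) ℝ)) *ᵥ x 0 =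
      (vecMulVec (ones p) r ⊗ₖ NormedSpace.exp ((0 : ℝ) • S)) *ᵥ x 0 := by
    rw [zero_smul, exp_zero]
  exact congrFun (eq_of_hasDerivAt_mulVec _ (fun s => (hx s).mulVec_of_mul_eq hkey)
    (hasDerivAt_kronecker_exp_smul_mulVec _ S (x 0)) hinit) t
end
end

section
/- Let S be skew-symmetric, H ∈ ℝ^{m×n} with (H,S) observable, and Γ connected with normalized left null vector r. Then every solution x of ẋ = (I_p ⊗ S + Γ ⊗ HᵀH)x satisfies x(t) − (𝟙rᵀ ⊗ exp(St))x(0) → 0 as t → ∞; i.e., the p components ξ_i(t) ∈ ℝⁿ of x synchronize to ξ̄(t) = (rᵀ ⊗ exp(St))x(0). -/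
open Matrix NormedSpace Filter
open scoped Kronecker

noncomputable section

/-- (H, S) is observable: the kernel of the stacked observability matrix is trivial. -/
def Observable {m n : ℕ} (H : Matrix (Fin m) (Fin n) ℝ) (S : Matrix (Fin n) (Fin n) ℝ) : Prop :=
  ∀ v : Fin n → ℝ, (∀ k < n, H *ᵥ (S ^ k *ᵥ v) = 0) → v = 0

/-!
The error `e(t) = x(t) - 𝟙 ⊗ e^{tS} ξ̄₀`, with `ξ̄₀ = (rᵀ ⊗ I) x(0)`, again solves `ė = A e` for
`A = I ⊗ S + Γ ⊗ HᵀH` (because `Γ𝟙 = 0`), and `e(0)` lies in `W = ker (rᵀ ⊗ I)`, which is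
`A`-invariant (because `rᵀΓ = 0`). So it suffices that, over `ℂ`, `A` has no generalized eigenvector
in `W` for an eigenvalue with `Re μ ≥ 0`; the remaining generalized eigenvectors decay like
`tʲ e^{t Re μ}`. A generalized eigenvector in an invariant subspace produces an eigenvector there.
An eigenvector `v` with `Re μ ≥ 0` is a consensus vector `𝟙 ⊗ w`: pairing the `i`-th block equation
with `vᵢ` and using that `S` is skew gives `Re μ ‖vᵢ‖² = ∑ⱼ Γᵢⱼ Re⟨Hvᵢ, Hvⱼ⟩`, which at a node
maximising `‖Hvᵢ‖` forces `Hvⱼ = Hvᵢ` along every edge; propagating to the root and using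
observability gives consensus. Finally `(rᵀ ⊗ I)(𝟙 ⊗ w) = w`, so a consensus vector in `W` is `0`.
-/

open scoped Topology

lemma tendsto_cexp_mul_mul_pow {μ : ℂ} (hμ : μ.re < 0) (j : ℕ) :
    Tendsto (fun t : ℝ => Complex.exp (t * μ) * (t : ℂ) ^ j) atTop (𝓝 0) := by
  rw [tendsto_zero_iff_norm_tendsto_zero]
  refine (tendsto_rpow_mul_exp_neg_mul_atTop_nhds_zero j (-μ.re) (by linarith)).congr' ?_
  filter_upwards [eventually_ge_atTop 0] with t ht
  rw [norm_mul, norm_pow, Complex.norm_exp, Complex.norm_real, Real.norm_of_nonneg ht,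
    Real.rpow_natCast, mul_comm]
  congr 2
  simp
  ring

namespace Matrix

section Algebra

variable {ι κ ο : Type*} [Fintype ι] [Fintype κ] [Fintype ο]

lemma curry_kronecker_mulVec {R : Type*} [CommSemiring R] (A : Matrix ι ι R) (B : Matrix κ κ R)
    (v : ι × κ → R) (i : ι) :
    ((A ⊗ₖ B) *ᵥ v).curry i = ∑ j, A i j • (B *ᵥ v.curry j) := by
  ext a
  simp only [Function.curry_apply, mulVec, dotProduct, kroneckerMap_apply, Fintype.sum_prod_type,
    Finset.sum_apply, Pi.smul_apply, smul_eq_mul, Finset.mul_sum, mul_assoc]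

lemma one_kronecker_add_kronecker_mulVec_const [DecidableEq ι] {R : Type*} [CommRing R]
    (S M : Matrix κ κ R) {Γ : Matrix ι ι R} (hrow : ∀ i, ∑ j, Γ i j = 0) (w : κ → R) :
    (1 ⊗ₖ S + Γ ⊗ₖ M) *ᵥ (fun q : ι × κ => w q.2) = fun q => (S *ᵥ w) q.2 := by
  ext ⟨i, a⟩
  have hc : ∀ j, (fun q : ι × κ => w q.2).curry j = w := fun _ => rfl
  have h1 := congrFun (curry_kronecker_mulVec 1 S (fun q : ι × κ => w q.2) i) a
  have h2 := congrFun (curry_kronecker_mulVec Γ M (fun q : ι × κ => w q.2) i) a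
  simp only [Function.curry_apply, hc] at h1 h2
  rw [add_mulVec, Pi.add_apply, h1, h2, ← Finset.sum_smul (f := fun j => Γ i j), hrow]
  simp [one_apply, ite_apply]

lemma vecMulVec_kronecker_mulVec {R : Type*} [CommSemiring R] (u r : ι → R) (M : Matrix κ κ R)
    (v : ι × κ → R) :
    (vecMulVec u r ⊗ₖ M) *ᵥ v = fun q => u q.1 * (M *ᵥ ∑ i, r i • v.curry i) q.2 := by
  ext ⟨i, a⟩
  have h := congrFun (curry_kronecker_mulVec (vecMulVec u r) M v i) a
  simp only [Function.curry_apply] at h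
  rw [h]
  simp [vecMulVec_apply, mulVec_sum, mulVec_smul, Finset.mul_sum, mul_assoc]

lemma re_star_dotProduct_mulVec_eq_zero {S : Matrix κ κ ℂ} (hS : Sᴴ = -S) (x : κ → ℂ) :
    (star x ⬝ᵥ (S *ᵥ x)).re = 0 := by
  have h : star (star x ⬝ᵥ (S *ᵥ x)) = -(star x ⬝ᵥ (S *ᵥ x)) := by
    rw [← star_dotProduct, star_mulVec, ← dotProduct_mulVec, hS, neg_mulVec, dotProduct_neg]
  have := congrArg Complex.re h
  simp only [Complex.star_def, Complex.conj_re, Complex.neg_re] at this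
  linarith

lemma star_dotProduct_conjTranspose_mulVec (H : Matrix ο κ ℂ) (x : κ → ℂ) (y : ο → ℂ) :
    star x ⬝ᵥ (Hᴴ *ᵥ y) = star (H *ᵥ x) ⬝ᵥ y := by
  rw [dotProduct_mulVec, star_mulVec]

lemma conjTranspose_map_ofReal_of_transpose_eq_neg {n : Type*} {S : Matrix n n ℝ}
    (hS : Sᵀ = -S) : (S.map (↑) : Matrix n n ℂ)ᴴ = -S.map (↑) := by
  ext a b
  simpa using congrArg (fun M : Matrix n n ℝ => (M a b : ℂ)) hS

lemma mulVec_comp_linearMap {m n : Type*} [Fintype n] (X : Matrix m n ℝ) (φ : ℂ →ₗ[ℝ] ℝ)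
    (w : n → ℂ) : X *ᵥ (φ ∘ w) = φ ∘ (X.map (↑) *ᵥ w) := by
  ext a
  simp [mulVec, dotProduct, map_sum, ← Complex.real_smul]

end Algebra

section Exponential

open scoped Norms.Operator Nat

variable {ι : Type*} [Fintype ι] [DecidableEq ι]

lemma exp_mulVec_eq_sum_of_pow_mulVec_eq_zero {𝕜 : Type*} [RCLike 𝕜] {N : Matrix ι ι 𝕜}
    {u : ι → 𝕜} {d : ℕ} (h : N ^ d *ᵥ u = 0) :
    exp N *ᵥ u = ∑ j ∈ Finset.range d, (j !⁻¹ : 𝕜) • (N ^ j *ᵥ u) := by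
  have hsum : HasSum (fun j => ((j !⁻¹ : 𝕜) • N ^ j) *ᵥ u) (exp N *ᵥ u) :=
    (NormedSpace.exp_series_hasSum_exp' N).map (mulVec.addMonoidHomLeft u)
      (continuous_id.matrix_mulVec continuous_const)
  simp only [smul_mulVec] at hsum
  refine hsum.unique (hasSum_sum_of_ne_finset_zero fun j hj => ?_)
  rw [Finset.mem_range, not_lt] at hj
  rw [← pow_sub_mul_pow N hj, ← mulVec_mulVec, h, mulVec_zero, smul_zero]

lemma exp_smul_mulVec_eq_sum {X : Matrix ι ι ℂ} {μ : ℂ} {u : ι → ℂ} {d : ℕ}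
    (h : (X - μ • 1) ^ d *ᵥ u = 0) (t : ℝ) :
    exp (t • X) *ᵥ u = ∑ j ∈ Finset.range d,
      (Complex.exp (t * μ) * (t : ℂ) ^ j * (j !⁻¹ : ℂ)) • ((X - μ • 1) ^ j *ᵥ u) := by
  have hsplit : t • X = (t : ℂ) • (X - μ • 1) + algebraMap ℂ _ (t * μ) := by
    rw [Algebra.algebraMap_eq_smul_one, smul_sub, smul_smul, sub_add_cancel, Complex.coe_smul]
  have htN : ((t : ℂ) • (X - μ • 1)) ^ d *ᵥ u = 0 := by
    rw [smul_pow, smul_mulVec, h, smul_zero]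
  have hscalar : exp (algebraMap ℂ (Matrix ι ι ℂ) (t * μ)) =
      algebraMap ℂ _ (Complex.exp (t * μ)) := by
    rw [Complex.exp_eq_exp_ℂ]
    exact (algebraMap_exp_comm _).symm
  rw [hsplit, Matrix.exp_add_of_commute _ _ (Algebra.commute_algebraMap_right _ _), hscalar,
    Algebra.algebraMap_eq_smul_one, mul_smul_one, smul_mulVec,
    exp_mulVec_eq_sum_of_pow_mulVec_eq_zero htN, Finset.smul_sum]
  refine Finset.sum_congr rfl fun j _ => ?_
  rw [smul_pow, smul_mulVec, smul_smul, smul_smul]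
  ring_nf

lemma tendsto_exp_smul_mulVec_of_pow_sub_smul_mulVec_eq_zero {X : Matrix ι ι ℂ} {μ : ℂ}
    (hμ : μ.re < 0) {u : ι → ℂ} {d : ℕ} (h : (X - μ • 1) ^ d *ᵥ u = 0) :
    Tendsto (fun t : ℝ => exp (t • X) *ᵥ u) atTop (𝓝 0) := by
  simp only [exp_smul_mulVec_eq_sum h]
  rw [← Finset.sum_const_zero (s := Finset.range d)]
  refine tendsto_finsetSum _ fun j _ => ?_
  simpa using ((tendsto_cexp_mul_mul_pow hμ j).mul_const (j !⁻¹ : ℂ)).smul_const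
    ((X - μ • 1) ^ j *ᵥ u)

lemma eq_zero_of_pow_sub_smul_mulVec_eq_zero {X : Matrix ι ι ℂ} {W : Submodule ℂ (ι → ℂ)}
    (hW : ∀ u ∈ W, X *ᵥ u ∈ W) {μ : ℂ} (hμ : ∀ u ∈ W, X *ᵥ u = μ • u → u = 0) (d : ℕ) :
    ∀ u ∈ W, (X - μ • 1) ^ d *ᵥ u = 0 → u = 0 := by
  induction d with
  | zero => simp
  | succ d ih =>
    intro u hu h
    have hsub : (X - μ • 1) *ᵥ u = X *ᵥ u - μ • u := by
      rw [sub_mulVec, smul_mulVec, one_mulVec]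
    rw [pow_succ, ← mulVec_mulVec] at h
    have h0 := ih _ (hsub ▸ W.sub_mem (hW u hu) (W.smul_mem μ hu)) h
    exact hμ u hu (sub_eq_zero.1 (hsub ▸ h0))

theorem tendsto_exp_smul_mulVec_of_mem {X : Matrix ι ι ℂ} {W : Submodule ℂ (ι → ℂ)}
    (hW : ∀ u ∈ W, X *ᵥ u ∈ W) (hX : ∀ μ : ℂ, 0 ≤ μ.re → ∀ u ∈ W, X *ᵥ u = μ • u → u = 0)
    {u : ι → ℂ} (hu : u ∈ W) :
    Tendsto (fun t : ℝ => exp (t • X) *ᵥ u) atTop (𝓝 0) := by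
  set f : Module.End ℂ (ι → ℂ) := Matrix.toLinAlgEquiv' X
  have hpow : ∀ (μ : ℂ) (d : ℕ) (v : ι → ℂ), ((f - μ • 1) ^ d) v = (X - μ • 1) ^ d *ᵥ v := by
    intro μ d v
    rw [← map_one Matrix.toLinAlgEquiv', ← map_smul, ← map_sub, ← map_pow]
    rfl
  have hu' : u ∈ ⨆ μ, W ⊓ Module.End.maxGenEigenspace f μ := by
    rw [← Submodule.inf_iSup_genEigenspace hW, Module.End.iSup_maxGenEigenspace_eq_top]
    exact ⟨hu, trivial⟩
  refine Submodule.iSup_induction _ (motive := fun v => Tendsto (fun t : ℝ => exp (t • X) *ᵥ v)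
    atTop (𝓝 0)) hu' (fun μ v hv => ?_) (by simp)
    fun v w hv hw => by simpa [mulVec_add] using hv.add hw
  obtain ⟨hvW, hv⟩ := hv
  obtain ⟨d, hd⟩ := (Module.End.mem_maxGenEigenspace f μ v).1 hv
  rw [hpow] at hd
  rcases lt_or_ge μ.re 0 with hneg | hnonneg
  · exact tendsto_exp_smul_mulVec_of_pow_sub_smul_mulVec_eq_zero hneg hd
  · simp [eq_zero_of_pow_sub_smul_mulVec_eq_zero hW (hX μ hnonneg) d v hvW hd]

lemma hasDerivAt_exp_smul_mulVec {𝕜 : Type*} [RCLike 𝕜] (X : Matrix ι ι 𝕜) (u : ι → 𝕜)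
    (t : ℝ) :
    HasDerivAt (fun s : ℝ => exp (s • X) *ᵥ u) (X *ᵥ (exp (t • X) *ᵥ u)) t := by
  let L : Matrix ι ι 𝕜 →L[ℝ] (ι → 𝕜) :=
    LinearMap.toContinuousLinearMap ((Matrix.mulVecBilin ℝ ℝ).flip u)
  rw [mulVec_mulVec]
  exact L.hasFDerivAt.comp_hasDerivAt t (hasDerivAt_exp_smul_const' (𝕂 := ℝ) X t)

lemma eq_exp_smul_mulVec_of_hasDerivAt {𝕜 : Type*} [RCLike 𝕜] {X : Matrix ι ι 𝕜}
    {y : ℝ → ι → 𝕜} (hy : ∀ t, HasDerivAt y (X *ᵥ y t) t) {t : ℝ} (ht : 0 ≤ t) :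
    y t = exp (t • X) *ᵥ y 0 := by
  have hlip : LipschitzWith _ (fun z : ι → 𝕜 => X *ᵥ z) :=
    (LinearMap.toContinuousLinearMap (Matrix.toLin' X)).lipschitz
  have hexp := hasDerivAt_exp_smul_mulVec X (y 0)
  refine ODE_solution_unique (v := fun _ z => X *ᵥ z) (fun _ => hlip)
    (fun s _ => (hy s).continuousAt.continuousWithinAt) (fun s _ => (hy s).hasDerivWithinAt)
    (fun s _ => (hexp s).continuousAt.continuousWithinAt) (fun s _ => (hexp s).hasDerivWithinAt)
    (by simp) ⟨ht, le_rfl⟩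

lemma tendsto_nhds_zero_of_hasDerivAt_mulVec {X : Matrix ι ι ℝ} {y : ℝ → ι → ℝ}
    (hy : ∀ t, HasDerivAt y (X *ᵥ y t) t)
    (hexp : Tendsto (fun t : ℝ => exp (t • X.map (↑)) *ᵥ fun q => (y 0 q : ℂ)) atTop (𝓝 0)) :
    Tendsto y atTop (𝓝 0) := by
  set yc : ℝ → ι → ℂ := fun t q => y t q
  have hyc : ∀ t, HasDerivAt yc (X.map (↑) *ᵥ yc t) t := fun t => by
    refine hasDerivAt_pi.2 fun q => ?_
    exact (hasDerivAt_pi.1 (hy t) q).ofReal_comp.congr_deriv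
      (RingHom.map_mulVec Complex.ofRealHom X (y t) q)
  have hlim : Tendsto yc atTop (𝓝 0) := hexp.congr' <| by
    filter_upwards [eventually_ge_atTop 0] with t ht
    exact (eq_exp_smul_mulVec_of_hasDerivAt hyc ht).symm
  have hre : Continuous fun z : ι → ℂ => fun q => (z q).re :=
    continuous_pi fun q => Complex.continuous_re.comp (continuous_apply q)
  exact (hre.tendsto 0).comp hlim

end Exponential

end Matrix

lemma Observable.eq_zero_of_mulVec_eq_smul {m n : ℕ} {H : Matrix (Fin m) (Fin n) ℝ}
    {S : Matrix (Fin n) (Fin n) ℝ} (hHS : Observable H S) {μ : ℂ} {w : Fin n → ℂ}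
    (hw : S.map (↑) *ᵥ w = μ • w) (hHw : H.map (↑) *ᵥ w = 0) : w = 0 := by
  -- Every `ℝ`-linear image of `w`, in particular `re ∘ w` and `im ∘ w`, is unobservable.
  have hcomp : ∀ φ : ℂ →ₗ[ℝ] ℝ, φ ∘ w = 0 := by
    intro φ
    have hpow : ∀ k, S ^ k *ᵥ (φ ∘ w) = φ ∘ (μ ^ k • w) := by
      intro k
      induction k with
      | zero => simp
      | succ k ih =>
        rw [pow_succ', ← mulVec_mulVec, ih, mulVec_comp_linearMap, mulVec_smul, hw, smul_smul,
          pow_succ]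
    refine hHS _ fun k _ => ?_
    rw [hpow, mulVec_comp_linearMap, mulVec_smul, hHw, smul_zero]
    ext; simp
  ext b
  exact Complex.ext (congrFun (hcomp Complex.reLm) b) (congrFun (hcomp Complex.imLm) b)

namespace NetworkSync

open Relation
open scoped Norms.Operator

section SqNorm

variable {κ : Type*} [Fintype κ]

def sqNorm (x : κ → ℂ) : ℝ := ∑ j, Complex.normSq (x j)

lemma sqNorm_nonneg (x : κ → ℂ) : 0 ≤ sqNorm x :=
  Finset.sum_nonneg fun _ _ => Complex.normSq_nonneg _

lemma eq_zero_of_sqNorm_eq_zero {x : κ → ℂ} (h : sqNorm x = 0) : x = 0 := by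
  funext j
  simpa using (Finset.sum_eq_zero_iff_of_nonneg fun i _ => Complex.normSq_nonneg (x i)).1 h j
    (Finset.mem_univ j)

lemma star_dotProduct_self (x : κ → ℂ) : star x ⬝ᵥ x = sqNorm x := by
  simp only [dotProduct, Pi.star_apply, sqNorm, Complex.ofReal_sum]
  exact Finset.sum_congr rfl fun j _ => Complex.normSq_eq_conj_mul_self.symm

lemma sqNorm_sub (x y : κ → ℂ) :
    sqNorm (x - y) = sqNorm x + sqNorm y - 2 * (star x ⬝ᵥ y).re := by
  have h := congrArg Complex.re (star_dotProduct_self (x - y))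
  have hyx : (star y ⬝ᵥ x).re = (star x ⬝ᵥ y).re := by
    rw [star_dotProduct]; simp
  simp only [star_sub, sub_dotProduct, dotProduct_sub, Complex.sub_re, star_dotProduct_self,
    Complex.ofReal_re, hyx] at h
  linarith

end SqNorm

variable {ι κ ο : Type*}

/-- `(rᵀ ⊗ I) v` -/
def weightedMean [Fintype ι] (r : ι → ℝ) : (ι × κ → ℂ) →ₗ[ℂ] (κ → ℂ) where
  toFun v := ∑ i, (r i : ℂ) • v.curry i
  map_add' v w := by
    ext
    simp [Finset.sum_add_distrib]
  map_smul' c v := by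
    ext
    simp [Finset.mul_sum, mul_left_comm]

lemma weightedMean_apply [Fintype ι] (r : ι → ℝ) (v : ι × κ → ℂ) :
    weightedMean r v = ∑ i, (r i : ℂ) • v.curry i :=
  rfl

lemma weightedMean_const [Fintype ι] {r : ι → ℝ} (hr1 : ∑ i, r i = 1) (w : κ → ℂ) :
    weightedMean r (fun q : ι × κ => w q.2) = w := by
  change ∑ i, (r i : ℂ) • w = w
  rw [← Finset.sum_smul, ← Complex.ofReal_sum, hr1, Complex.ofReal_one, one_smul]

/-- The complexified system matrix `I ⊗ S + Γ ⊗ HᴴH`; block `i` of `v : ι × κ → ℂ` is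
`v.curry i`. -/
def networkMatrix [DecidableEq ι] [Fintype ο] (S : Matrix κ κ ℂ) (H : Matrix ο κ ℂ)
    (Γ : Matrix ι ι ℝ) : Matrix (ι × κ) (ι × κ) ℂ :=
  1 ⊗ₖ S + Γ.map (↑) ⊗ₖ (Hᴴ * H)

lemma map_ofReal_one_kronecker_add_kronecker [DecidableEq ι] [Fintype ο] (S : Matrix κ κ ℝ)
    (H : Matrix ο κ ℝ) (Γ : Matrix ι ι ℝ) :
    (1 ⊗ₖ S + Γ ⊗ₖ (Hᵀ * H)).map (↑) = networkMatrix (S.map (↑)) (H.map (↑)) Γ := by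
  ext ⟨i, a⟩ ⟨j, b⟩
  simp [networkMatrix, one_apply, mul_apply, apply_ite Complex.ofReal]

variable [Fintype ι] [DecidableEq ι] [Fintype κ] [Fintype ο]
  {S : Matrix κ κ ℂ} {H : Matrix ο κ ℂ} {Γ : Matrix ι ι ℝ}

lemma curry_networkMatrix_mulVec (v : ι × κ → ℂ) (i : ι) :
    (networkMatrix S H Γ *ᵥ v).curry i =
      S *ᵥ v.curry i + ∑ j, (Γ i j : ℂ) • (Hᴴ *ᵥ (H *ᵥ v.curry j)) := by
  ext a
  have h1 := congrFun (curry_kronecker_mulVec (1 : Matrix ι ι ℂ) S v i) a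
  have h2 := congrFun (curry_kronecker_mulVec (Γ.map (↑)) (Hᴴ * H) v i) a
  simp only [Function.curry_apply] at h1 h2 ⊢
  rw [networkMatrix, add_mulVec, Pi.add_apply, h1, h2]
  simp [one_apply, mulVec_mulVec, ite_apply]

lemma re_mul_sqNorm_curry (hS : Sᴴ = -S) {μ : ℂ} {v : ι × κ → ℂ}
    (hv : networkMatrix S H Γ *ᵥ v = μ • v) (i : ι) :
    μ.re * sqNorm (v.curry i) =
      ∑ j, Γ i j * (star (H *ᵥ v.curry i) ⬝ᵥ (H *ᵥ v.curry j)).re := by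
  have h : star (v.curry i) ⬝ᵥ (networkMatrix S H Γ *ᵥ v).curry i = μ * sqNorm (v.curry i) := by
    rw [hv, ← star_dotProduct_self]
    exact dotProduct_smul μ _ _
  rw [curry_networkMatrix_mulVec, dotProduct_add, dotProduct_sum] at h
  have := congrArg Complex.re h
  simp only [Complex.add_re, re_star_dotProduct_mulVec_eq_zero hS, Complex.re_sum, dotProduct_smul,
    smul_eq_mul, star_dotProduct_conjTranspose_mulVec H, Complex.re_ofReal_mul, zero_add] at this
  rw [this, Complex.re_mul_ofReal]

lemma mulVec_curry_eq_of_isMax (hS : Sᴴ = -S) (hoff : ∀ i j, i ≠ j → 0 ≤ Γ i j)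
    (hrow : ∀ i, ∑ j, Γ i j = 0) {μ : ℂ} (hμ : 0 ≤ μ.re) {v : ι × κ → ℂ}
    (hv : networkMatrix S H Γ *ᵥ v = μ • v) {i j : ι}
    (hmax : ∀ l, sqNorm (H *ᵥ v.curry l) ≤ sqNorm (H *ᵥ v.curry i)) (hij : 0 < Γ i j) :
    H *ᵥ v.curry j = H *ᵥ v.curry i := by
  set y := fun l => H *ᵥ v.curry l
  set c := fun l => (star (y i) ⬝ᵥ y l).re
  -- At the maximiser `i` every term `Γ i l * (c l - ‖y i‖²)` is `≤ 0`, yet by the energy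
  -- identity their sum is `Re μ ‖v i‖² ≥ 0`; so each vanishes, and `c j = ‖y i‖²` forces
  -- `y j = y i`.
  have hc : ∀ l, 2 * (c l - sqNorm (y i)) = sqNorm (y l) - sqNorm (y i) - sqNorm (y i - y l) := by
    intro l; rw [sqNorm_sub]; ring
  have hterm : ∀ l, Γ i l * (c l - sqNorm (y i)) ≤ 0 := by
    intro l
    rcases eq_or_ne i l with rfl | hil
    · have : c i = sqNorm (y i) := by simp [c, star_dotProduct_self]
      simp [this]
    · refine mul_nonpos_of_nonneg_of_nonpos (hoff i l hil) ?_
      linarith [hc l, hmax l, sqNorm_nonneg (y i - y l)]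
  have hsum : 0 ≤ ∑ l, Γ i l * (c l - sqNorm (y i)) := by
    simp only [mul_sub, Finset.sum_sub_distrib, ← Finset.sum_mul, hrow i, zero_mul, sub_zero]
    rw [← re_mul_sqNorm_curry hS hv i]
    exact mul_nonneg hμ (sqNorm_nonneg _)
  have hj : Γ i j * (c j - sqNorm (y i)) = 0 :=
    (Finset.sum_eq_zero_iff_of_nonpos fun l _ => hterm l).1
      (le_antisymm (Finset.sum_nonpos fun l _ => hterm l) hsum) j (Finset.mem_univ j)
  have hcj : c j = sqNorm (y i) := by
    linarith [(mul_eq_zero.1 hj).resolve_left hij.ne']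
  have hsq : sqNorm (y i - y j) = 0 :=
    le_antisymm (by linarith [hc j, hmax j]) (sqNorm_nonneg _)
  exact (sub_eq_zero.1 (eq_zero_of_sqNorm_eq_zero hsq)).symm

lemma mulVec_curry_eq_of_reflTransGen (hS : Sᴴ = -S) (hoff : ∀ i j, i ≠ j → 0 ≤ Γ i j)
    (hrow : ∀ i, ∑ j, Γ i j = 0) {μ : ℂ} (hμ : 0 ≤ μ.re) {v : ι × κ → ℂ}
    (hv : networkMatrix S H Γ *ᵥ v = μ • v) {i j : ι}
    (hmax : ∀ l, sqNorm (H *ᵥ v.curry l) ≤ sqNorm (H *ᵥ v.curry i))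
    (hij : ReflTransGen (fun a b => 0 < Γ a b) i j) :
    H *ᵥ v.curry j = H *ᵥ v.curry i := by
  induction hij with
  | refl => rfl
  | tail _ hbc ih =>
    rw [mulVec_curry_eq_of_isMax hS hoff hrow hμ hv (by rwa [ih]) hbc, ih]

lemma sqNorm_mulVec_curry_le_root (hS : Sᴴ = -S) (hoff : ∀ i j, i ≠ j → 0 ≤ Γ i j)
    (hrow : ∀ i, ∑ j, Γ i j = 0) {k : ι} (hk : ∀ i, ReflTransGen (fun a b => 0 < Γ a b) i k)
    {μ : ℂ} (hμ : 0 ≤ μ.re) {v : ι × κ → ℂ} (hv : networkMatrix S H Γ *ᵥ v = μ • v) (l : ι) :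
    sqNorm (H *ᵥ v.curry l) ≤ sqNorm (H *ᵥ v.curry k) := by
  have : Nonempty ι := ⟨k⟩
  obtain ⟨i, hi⟩ := Finite.exists_max fun l => sqNorm (H *ᵥ v.curry l)
  rw [mulVec_curry_eq_of_reflTransGen hS hoff hrow hμ hv hi (hk i)]
  exact hi l

lemma mulVec_curry_eq_smul_of_forall_pos (hoff : ∀ i j, i ≠ j → 0 ≤ Γ i j)
    (hrow : ∀ i, ∑ j, Γ i j = 0) {μ : ℂ} {v : ι × κ → ℂ}
    (hv : networkMatrix S H Γ *ᵥ v = μ • v) {i : ι}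
    (hi : ∀ j, 0 < Γ i j → H *ᵥ v.curry j = H *ᵥ v.curry i) :
    S *ᵥ v.curry i = μ • v.curry i := by
  have hterm : ∀ j, (Γ i j : ℂ) • (Hᴴ *ᵥ (H *ᵥ v.curry j)) =
      (Γ i j : ℂ) • (Hᴴ *ᵥ (H *ᵥ v.curry i)) := by
    intro j
    rcases eq_or_ne i j with rfl | hij
    · rfl
    rcases (hoff i j hij).eq_or_lt with h0 | hpos
    · simp [← h0]
    · rw [hi j hpos]
  have hcurry := curry_networkMatrix_mulVec (S := S) (H := H) (Γ := Γ) v i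
  rw [Finset.sum_congr rfl fun j _ => hterm j, ← Finset.sum_smul, ← Complex.ofReal_sum, hrow i,
    Complex.ofReal_zero, zero_smul, add_zero, hv] at hcurry
  exact hcurry.symm

lemma networkMatrix_mulVec_const (hrow : ∀ i, ∑ j, Γ i j = 0) (w : κ → ℂ) :
    networkMatrix S H Γ *ᵥ (fun q : ι × κ => w q.2) = fun q => (S *ᵥ w) q.2 :=
  one_kronecker_add_kronecker_mulVec_const S _ (fun i => by simp [← Complex.ofReal_sum, hrow i]) w

theorem eq_const_of_networkMatrix_mulVec_eq_smul (hS : Sᴴ = -S)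
    (hobs : ∀ (μ : ℂ) (w : κ → ℂ), S *ᵥ w = μ • w → H *ᵥ w = 0 → w = 0)
    (hoff : ∀ i j, i ≠ j → 0 ≤ Γ i j) (hrow : ∀ i, ∑ j, Γ i j = 0) {k : ι}
    (hk : ∀ i, ReflTransGen (fun a b => 0 < Γ a b) i k) {μ : ℂ} (hμ : 0 ≤ μ.re)
    {v : ι × κ → ℂ} (hv : networkMatrix S H Γ *ᵥ v = μ • v) :
    v = fun q => v (k, q.2) := by
  have hroot : S *ᵥ v.curry k = μ • v.curry k :=
    mulVec_curry_eq_smul_of_forall_pos hoff hrow hv fun _ hj => mulVec_curry_eq_of_isMax hS hoff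
      hrow hμ hv (sqNorm_mulVec_curry_le_root hS hoff hrow hk hμ hv) hj
  -- `v - 𝟙 ⊗ v_k` is again an eigenvector; it vanishes at the root, which maximises `‖H ·‖`.
  set w := v - fun q => v (k, q.2)
  have hw : networkMatrix S H Γ *ᵥ w = μ • w := by
    have hconst := networkMatrix_mulVec_const (S := S) (H := H) hrow (v.curry k)
    simp only [Function.curry_apply] at hconst
    rw [mulVec_sub, hv, hconst]
    simp only [hroot]
    ext q
    simp [w, mul_sub]
  have hHw : ∀ l, H *ᵥ w.curry l = 0 := by
    intro l
    have hwk : w.curry k = 0 := by ext; simp [w]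
    have := sqNorm_mulVec_curry_le_root hS hoff hrow hk hμ hw l
    rw [hwk, mulVec_zero] at this
    exact eq_zero_of_sqNorm_eq_zero (le_antisymm (by simpa [sqNorm] using this) (sqNorm_nonneg _))
  have hw0 : ∀ l, w.curry l = 0 := fun l =>
    hobs μ _ (mulVec_curry_eq_smul_of_forall_pos hoff hrow hw fun j _ => by rw [hHw, hHw]) (hHw l)
  ext ⟨i, a⟩
  exact sub_eq_zero.1 (congrFun (hw0 i) a)

theorem eq_zero_of_networkMatrix_mulVec_eq_smul (hS : Sᴴ = -S)
    (hobs : ∀ (μ : ℂ) (w : κ → ℂ), S *ᵥ w = μ • w → H *ᵥ w = 0 → w = 0)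
    (hoff : ∀ i j, i ≠ j → 0 ≤ Γ i j) (hrow : ∀ i, ∑ j, Γ i j = 0) {k : ι}
    (hk : ∀ i, ReflTransGen (fun a b => 0 < Γ a b) i k) {r : ι → ℝ} (hr1 : ∑ i, r i = 1)
    {μ : ℂ} (hμ : 0 ≤ μ.re) {v : ι × κ → ℂ} (hvr : weightedMean r v = 0)
    (hv : networkMatrix S H Γ *ᵥ v = μ • v) :
    v = 0 := by
  have hconst := eq_const_of_networkMatrix_mulVec_eq_smul hS hobs hoff hrow hk hμ hv
  have hk0 : v.curry k = 0 := by
    rw [← hvr, hconst]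
    exact (weightedMean_const hr1 _).symm
  rw [hconst]
  ext q
  exact congrFun hk0 q.2

lemma weightedMean_networkMatrix_mulVec {r : ι → ℝ} (hrΓ : r ᵥ* Γ = 0) (v : ι × κ → ℂ) :
    weightedMean r (networkMatrix S H Γ *ᵥ v) = S *ᵥ weightedMean r v := by
  have hcol : ∀ j, ∑ i, (r i : ℂ) * Γ i j = 0 := fun j => by
    exact_mod_cast congrFun hrΓ j
  simp only [weightedMean_apply, curry_networkMatrix_mulVec, smul_add, Finset.sum_add_distrib,
    Finset.smul_sum, smul_smul, mulVec_sum, mulVec_smul]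
  rw [Finset.sum_comm (f := fun i j => _), add_eq_left]
  simp only [← Finset.sum_smul, hcol, zero_smul, Finset.sum_const_zero]

theorem tendsto_exp_smul_networkMatrix_mulVec [DecidableEq κ] (hS : Sᴴ = -S)
    (hobs : ∀ (μ : ℂ) (w : κ → ℂ), S *ᵥ w = μ • w → H *ᵥ w = 0 → w = 0)
    (hoff : ∀ i j, i ≠ j → 0 ≤ Γ i j) (hrow : ∀ i, ∑ j, Γ i j = 0) {k : ι}
    (hk : ∀ i, ReflTransGen (fun a b => 0 < Γ a b) i k) {r : ι → ℝ} (hrΓ : r ᵥ* Γ = 0)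
    (hr1 : ∑ i, r i = 1) {u : ι × κ → ℂ} (hu : weightedMean r u = 0) :
    Tendsto (fun t : ℝ => exp (t • networkMatrix S H Γ) *ᵥ u) atTop (𝓝 0) :=
  tendsto_exp_smul_mulVec_of_mem (W := LinearMap.ker (weightedMean r))
    (fun v hv => by
      rw [LinearMap.mem_ker] at hv ⊢
      rw [weightedMean_networkMatrix_mulVec hrΓ, hv, mulVec_zero])
    (fun _ hμ _ hv => eq_zero_of_networkMatrix_mulVec_eq_smul hS hobs hoff hrow hk hr1 hμ hv) hu

end NetworkSync

open NetworkSync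

/-- For skew-symmetric S, observable (H,S) and connected Γ, solutions of
ẋ = (I_p ⊗ S + Γ ⊗ HᵀH)x synchronize to (𝟙rᵀ ⊗ exp(St))x(0). -/
theorem stmt15 {p n m : ℕ} (S : Matrix (Fin n) (Fin n) ℝ) (hS : Sᵀ = -S)
    (H : Matrix (Fin m) (Fin n) ℝ) (hHS : Observable H S)
    (Γ : Matrix (Fin p) (Fin p) ℝ) (hΓ : IsConnectedMatrix Γ)
    (r : Fin p → ℝ) (hrΓ : r ᵥ* Γ = 0) (hr1 : ∑ i, r i = 1)
    (x : ℝ → Fin p × Fin n → ℝ)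
    (hx : ∀ t, HasDerivAt x
      (((1 : Matrix (Fin p) (Fin p) ℝ) ⊗ₖ S + Γ ⊗ₖ (Hᵀ * H)) *ᵥ x t) t) :
    Tendsto
      (fun t : ℝ => x t - (vecMulVec (ones p) r ⊗ₖ NormedSpace.exp (t • S)) *ᵥ x 0)
      atTop (nhds 0) := by
  obtain ⟨hoff, hrow, k, hk⟩ := hΓ
  set ξ₀ : Fin n → ℝ := ∑ i, r i • (x 0).curry i
  have hmean : ∀ t : ℝ, (vecMulVec (ones p) r ⊗ₖ exp (t • S)) *ᵥ x 0 =
      fun q => (exp (t • S) *ᵥ ξ₀) q.2 := fun t => by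
    simp [vecMulVec_kronecker_mulVec, ones, ξ₀]
  simp only [hmean]
  refine tendsto_nhds_zero_of_hasDerivAt_mulVec (X := 1 ⊗ₖ S + Γ ⊗ₖ (Hᵀ * H)) (fun t => ?_) ?_
  · have hsync := hasDerivAt_pi.2 fun q : Fin p × Fin n =>
      hasDerivAt_pi.1 (hasDerivAt_exp_smul_mulVec S ξ₀ t) q.2
    rw [← one_kronecker_add_kronecker_mulVec_const S (Hᵀ * H) hrow] at hsync
    rw [mulVec_sub]
    exact (hx t).sub hsync
  · rw [map_ofReal_one_kronecker_add_kronecker]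
    refine tendsto_exp_smul_networkMatrix_mulVec (conjTranspose_map_ofReal_of_transpose_eq_neg hS)
      (fun _ _ => hHS.eq_zero_of_mulVec_eq_smul) hoff hrow hk hrΓ hr1 ?_
    ext a
    simp [weightedMean_apply, ξ₀, mul_sub, Finset.sum_sub_distrib, ← Finset.sum_mul,
      ← Complex.ofReal_sum, hr1]
    push_cast
    ring
end
end

section
/- Consider p coupled harmonic oscillators ẋ_i = y_i, ẏ_i = −x_i + Σ_j γ_{ij}(y_j − y_i), i = 1,…,p, where Γ = [γ_{ij}] is connected. Then the oscillators synchronize: |x_i(t) − x_j(t)| + |y_i(t) − y_j(t)| → 0 as t → ∞ for all i, j. -/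
open Matrix NormedSpace Filter
open scoped Kronecker

noncomputable section

/-!
The differences `e = (x a - x last, y a - y last)` to the last oscillator solve a linear system
`ė = M e` with `M = [[0, 1], [-1, G]]`, where `G` is `Γ` acting on vectors modulo constants.
By Gershgorin every nonzero eigenvalue of `Γ` has negative real part, and connectivity (a maximum
principle) makes `0` an algebraically simple eigenvalue with eigenvector `1`; hence `G` is Hurwitz.
An eigenvalue `μ` of `M` gives `G v = (μ + μ⁻¹) v`, and `re (μ + μ⁻¹)` has the sign of `re μ`,
so `M` is Hurwitz as well. On each generalized eigenspace `exp (t M)` is `exp (t μ)` times a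
polynomial in `t`, so `e → 0`.
-/

open Finset Topology Module.End

section ZeroRowSums

variable {ι R : Type*} [Fintype ι] [Ring R] {Γ : Matrix ι ι R}

theorem mulVec_sub_const (hrow : ∀ i, ∑ j, Γ i j = 0) (w : ι → R) (c : R) :
    (Γ *ᵥ fun j => w j - c) = Γ *ᵥ w := by
  funext i
  simp [mulVec, dotProduct, mul_sub, sum_sub_distrib, ← sum_mul, hrow]

end ZeroRowSums

section MaximumPrinciple

variable {ι : Type*} {Γ : Matrix ι ι ℝ}

theorem mul_sub_nonpos_of_forall_le (hoff : ∀ i j, i ≠ j → 0 ≤ Γ i j) {w : ι → ℝ} {a : ι}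
    (ha : ∀ j, w j ≤ w a) (j : ι) : Γ a j * (w j - w a) ≤ 0 := by
  rcases eq_or_ne j a with rfl | hj
  · simp
  · exact mul_nonpos_of_nonneg_of_nonpos (hoff a j hj.symm) (sub_nonpos.mpr (ha j))

theorem mulVec_apply_nonpos_of_forall_le [Fintype ι] (hoff : ∀ i j, i ≠ j → 0 ≤ Γ i j)
    (hrow : ∀ i, ∑ j, Γ i j = 0) {w : ι → ℝ} {a : ι} (ha : ∀ j, w j ≤ w a) :
    (Γ *ᵥ w) a ≤ 0 := by
  rw [← mulVec_sub_const hrow w (w a)]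
  exact sum_nonpos fun j _ => mul_sub_nonpos_of_forall_le hoff ha j

theorem apply_eq_of_mulVec_apply_eq_zero [Fintype ι] (hoff : ∀ i j, i ≠ j → 0 ≤ Γ i j)
    (hrow : ∀ i, ∑ j, Γ i j = 0) {w : ι → ℝ} {a b : ι} (ha : ∀ j, w j ≤ w a)
    (hwa : (Γ *ᵥ w) a = 0) (hab : 0 < Γ a b) : w b = w a := by
  rw [← mulVec_sub_const hrow w (w a)] at hwa
  have hterm := (sum_eq_zero_iff_of_nonpos fun j _ => mul_sub_nonpos_of_forall_le hoff ha j).mp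
    hwa b (mem_univ b)
  linarith [(mul_eq_zero.mp hterm).resolve_left hab.ne']

theorem apply_eq_of_reflTransGen [Fintype ι] (hoff : ∀ i j, i ≠ j → 0 ≤ Γ i j)
    (hrow : ∀ i, ∑ j, Γ i j = 0) {w : ι → ℝ} (hw : Γ *ᵥ w = 0) {a b : ι}
    (ha : ∀ j, w j ≤ w a) (hab : Relation.ReflTransGen (fun a b => 0 < Γ a b) a b) :
    w b = w a := by
  induction hab with
  | refl => rfl
  | tail _ hbc ih =>
    exact (apply_eq_of_mulVec_apply_eq_zero hoff hrow (ih ▸ ha) (by simp [hw]) hbc).trans ih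

end MaximumPrinciple

theorem IsConnectedMatrix.apply_eq_of_mulVec_eq_const {p : ℕ} {Γ : Matrix (Fin p) (Fin p) ℝ}
    (hΓ : IsConnectedMatrix Γ) {w : Fin p → ℝ} {e : ℝ} (hw : Γ *ᵥ w = fun _ => e)
    (i j : Fin p) : w i = w j := by
  obtain ⟨hoff, hrow, k, hk⟩ := hΓ
  have : Nonempty (Fin p) := ⟨i⟩
  obtain ⟨m, hm⟩ := Finite.exists_max w
  obtain ⟨m', hm'⟩ := Finite.exists_min w
  have hw0 : Γ *ᵥ w = 0 := by
    have hmax := mulVec_apply_nonpos_of_forall_le hoff hrow hm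
    have hmin := mulVec_apply_nonpos_of_forall_le hoff hrow (w := -w) (by simpa using hm')
    simp only [mulVec_neg, hw, Pi.neg_apply, neg_nonpos] at hmin hmax
    rw [hw, le_antisymm hmax hmin]
    rfl
  have hk_max := apply_eq_of_reflTransGen hoff hrow hw0 hm (hk m)
  have hk_min := apply_eq_of_reflTransGen hoff hrow (w := -w) (by rw [mulVec_neg, hw0, neg_zero])
    (by simpa using hm') (hk m')
  simp only [Pi.neg_apply, neg_inj] at hk_min
  linarith [hm i, hm j, hm' i, hm' j]

theorem IsConnectedMatrix.apply_eq_of_map_mulVec_eq_const {p : ℕ}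
    {Γ : Matrix (Fin p) (Fin p) ℝ} (hΓ : IsConnectedMatrix Γ) {v : Fin p → ℂ} {d : ℂ}
    (hv : (Γ.map (↑) : Matrix (Fin p) (Fin p) ℂ) *ᵥ v = fun _ => d) (i j : Fin p) :
    v i = v j := by
  refine Complex.ext (hΓ.apply_eq_of_mulVec_eq_const (w := fun a => (v a).re) (e := d.re) ?_ i j)
    (hΓ.apply_eq_of_mulVec_eq_const (w := fun a => (v a).im) (e := d.im) ?_ i j) <;>
  · funext a
    have := congrFun hv a
    simp only [mulVec, dotProduct, map_apply] at this
    simp [mulVec, dotProduct, ← this, Complex.re_sum, Complex.im_sum]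

theorem eq_zero_or_re_neg_of_hasEigenvalue {ι : Type*} [Fintype ι] [DecidableEq ι]
    {Γ : Matrix ι ι ℝ} (hoff : ∀ i j, i ≠ j → 0 ≤ Γ i j) (hrow : ∀ i, ∑ j, Γ i j = 0) {c : ℂ}
    (hc : HasEigenvalue (toLin' (Γ.map (↑) : Matrix ι ι ℂ)) c) : c = 0 ∨ c.re < 0 := by
  -- Gershgorin: the disc around `Γ m m ≤ 0` of radius `-Γ m m` meets `0 ≤ re` only at `0`.
  obtain ⟨m, hm⟩ := eigenvalue_mem_ball hc
  have hradius : ∑ j ∈ univ.erase m, ‖(Γ.map (↑) : Matrix ι ι ℂ) m j‖ = -Γ m m := by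
    rw [sum_congr rfl fun j hj => by
      rw [map_apply, Complex.norm_real, Real.norm_of_nonneg (hoff m j (ne_of_mem_erase hj).symm)],
      sum_erase_eq_sub (mem_univ m), hrow m, zero_sub]
  rw [hradius, Metric.mem_closedBall, dist_eq_norm, map_apply] at hm
  have hdisc : (c.re - Γ m m) ^ 2 + c.im ^ 2 ≤ Γ m m ^ 2 := by
    have := pow_le_pow_left₀ (norm_nonneg _) hm 2
    rw [Complex.sq_norm, Complex.normSq_apply, neg_sq] at this
    simpa [sq] using this
  have hdiag : Γ m m ≤ 0 := by linarith [(norm_nonneg _).trans hm]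
  refine or_iff_not_imp_right.mpr fun hre => ?_
  have hsq : c.re ^ 2 + c.im ^ 2 ≤ 0 := by nlinarith
  exact Complex.ext (by rw [Complex.zero_re]; nlinarith) (by rw [Complex.zero_im]; nlinarith)

/-- The matrix of `Γ` on `R^(n+1)` modulo constant vectors, in the coordinates
`w a - w (Fin.last n)`, `a < n`. -/
def reducedMatrix {R : Type*} [Ring R] {n : ℕ} (Γ : Matrix (Fin (n + 1)) (Fin (n + 1)) R) :
    Matrix (Fin n) (Fin n) R :=
  of fun a b => Γ a.castSucc b.castSucc - Γ (Fin.last n) b.castSucc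

section ReducedMatrix

variable {R : Type*} [Ring R] {n : ℕ} {Γ : Matrix (Fin (n + 1)) (Fin (n + 1)) R}

theorem reducedMatrix_map {S : Type*} [Ring S] (f : R →+* S) :
    (reducedMatrix Γ).map f = reducedMatrix (Γ.map f) := by
  ext a b
  simp [reducedMatrix]

theorem reducedMatrix_mulVec_apply (hrow : ∀ i, ∑ j, Γ i j = 0) (w : Fin (n + 1) → R)
    (a : Fin n) :
    (reducedMatrix Γ *ᵥ fun b => w b.castSucc - w (Fin.last n)) a =
      (Γ *ᵥ w) a.castSucc - (Γ *ᵥ w) (Fin.last n) := by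
  rw [← mulVec_sub_const hrow w (w (Fin.last n))]
  simp [mulVec, dotProduct, reducedMatrix, Fin.sum_univ_castSucc, sub_mul, sum_sub_distrib]

theorem mulVec_eq_smul_add_const_of_reducedMatrix_mulVec (hrow : ∀ i, ∑ j, Γ i j = 0)
    {v : Fin (n + 1) → R} (hlast : v (Fin.last n) = 0) {c : R}
    (hv : (reducedMatrix Γ *ᵥ fun a => v a.castSucc) = c • fun a => v a.castSucc) :
    Γ *ᵥ v = fun i => c * v i + (Γ *ᵥ v) (Fin.last n) := by
  funext i
  induction i using Fin.lastCases with
  | last => simp [hlast]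
  | cast a =>
    have := reducedMatrix_mulVec_apply hrow v a
    simp only [hlast, sub_zero, hv, Pi.smul_apply, smul_eq_mul] at this
    rw [this, sub_add_cancel]

end ReducedMatrix

theorem IsConnectedMatrix.re_neg_of_hasEigenvalue_reducedMatrix {n : ℕ}
    {Γ : Matrix (Fin (n + 1)) (Fin (n + 1)) ℝ} (hΓ : IsConnectedMatrix Γ) {c : ℂ}
    (hc : HasEigenvalue (toLin' ((reducedMatrix Γ).map (↑) : Matrix (Fin n) (Fin n) ℂ)) c) :
    c.re < 0 := by
  obtain ⟨hoff, hrow, -⟩ := id hΓ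
  set Γc : Matrix (Fin (n + 1)) (Fin (n + 1)) ℂ := Γ.map (↑)
  have hrowc : ∀ i, ∑ j, Γc i j = 0 := fun i => by simp [Γc, ← Complex.ofReal_sum, hrow]
  obtain ⟨u, hu, hu0⟩ := hc.exists_hasEigenvector
  have hGu : reducedMatrix Γc *ᵥ u = c • u := by
    rw [show Γc = Γ.map Complex.ofRealHom from rfl, ← reducedMatrix_map]
    exact mem_eigenspace_iff.mp hu
  -- Extended by `0`, the eigenvector satisfies `Γ v = c v + d 1`: for `c = 0` connectivity rules
  -- this out, otherwise `v + (d / c) 1` is an eigenvector of `Γ` itself.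
  set v : Fin (n + 1) → ℂ := Fin.snoc u 0
  set d := (Γc *ᵥ v) (Fin.last n)
  have hv : Γc *ᵥ v = fun i => c * v i + d :=
    mulVec_eq_smul_add_const_of_reducedMatrix_mulVec hrowc (Fin.snoc_last ..)
      (by simpa [v] using hGu)
  obtain ⟨a, ha⟩ : ∃ a : Fin n, v a.castSucc ≠ v (Fin.last n) := by
    simpa [v, Function.ne_iff] using hu0
  rcases eq_or_ne c 0 with rfl | hc0
  · exact absurd (hΓ.apply_eq_of_map_mulVec_eq_const (by simpa using hv) _ _) ha
  refine (eq_zero_or_re_neg_of_hasEigenvalue hoff hrow (hasEigenvalue_of_hasEigenvector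
    (x := fun i => v i + d / c) ⟨mem_eigenspace_iff.mpr ?_, ?_⟩)).resolve_left hc0
  · have hshift := mulVec_sub_const hrowc v (-(d / c))
    simp only [sub_neg_eq_add] at hshift
    rw [toLin'_apply, hshift, hv]
    funext i
    simp only [Pi.smul_apply, smul_eq_mul]
    field_simp
  · intro h
    have h₁ := congrFun h a.castSucc
    have h₂ := congrFun h (Fin.last n)
    exact ha (by simp only [Pi.zero_apply] at h₁ h₂; linear_combination h₁ - h₂)

theorem re_neg_of_hasEigenvalue_fromBlocks {ι : Type*} [Fintype ι] [DecidableEq ι]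
    {G : Matrix ι ι ℂ} (hG : ∀ c, HasEigenvalue (toLin' G) c → c.re < 0) {μ : ℂ}
    (hμ : HasEigenvalue (toLin' (fromBlocks 0 1 (-1) G : Matrix (ι ⊕ ι) (ι ⊕ ι) ℂ)) μ) :
    μ.re < 0 := by
  obtain ⟨z, hz, hz0⟩ := hμ.exists_hasEigenvector
  have hz' := mem_eigenspace_iff.mp hz
  rw [toLin'_apply, fromBlocks_mulVec] at hz'
  set u := z ∘ Sum.inl
  set v := z ∘ Sum.inr
  have hvu : v = μ • u := funext fun i => by simpa [u, v] using congrFun hz' (Sum.inl i)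
  have hGv : -u + G *ᵥ v = μ • v := funext fun i => by
    simpa [u, v, neg_mulVec] using congrFun hz' (Sum.inr i)
  have hz_eq : z = Sum.elim u v := by
    funext s
    cases s <;> rfl
  have hμ0 : μ ≠ 0 := by
    rintro rfl
    rw [zero_smul] at hvu
    rw [hvu, mulVec_zero, add_zero, zero_smul, neg_eq_zero] at hGv
    exact hz0 (by rw [hz_eq, hGv, hvu]; ext (_ | _) <;> rfl)
  have hu : u = μ⁻¹ • v := by rw [hvu, smul_smul, inv_mul_cancel₀ hμ0, one_smul]
  have hv0 : v ≠ 0 := by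
    rintro hv
    rw [hv, smul_zero] at hu
    exact hz0 (by rw [hz_eq, hu, hv]; ext (_ | _) <;> rfl)
  have hc := hG (μ + μ⁻¹) (hasEigenvalue_of_hasEigenvector ⟨mem_eigenspace_iff.mpr ?_, hv0⟩)
  · rw [Complex.add_re, Complex.inv_re] at hc
    by_contra! hre
    exact hc.not_ge (add_nonneg hre (div_nonneg hre (Complex.normSq_nonneg μ)))
  · rw [toLin'_apply, add_smul, ← hu, ← hGv]
    abel

theorem tendsto_pow_mul_exp_mul_atTop_nhds_zero (n : ℕ) {b : ℝ} (hb : b < 0) :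
    Tendsto (fun t : ℝ => t ^ n * Real.exp (b * t)) atTop (𝓝 0) := by
  refine (tendsto_rpow_mul_exp_neg_mul_atTop_nhds_zero n (-b) (neg_pos.mpr hb)).congr' ?_
  filter_upwards [eventually_gt_atTop 0] with t ht
  rw [Real.rpow_natCast, neg_neg]

section LinearODE

variable {E : Type*} [NormedAddCommGroup E] [NormedSpace ℂ E]

theorem hasDerivAt_exp_smul_apply [CompleteSpace E] (B : E →L[ℂ] E) (w₀ : E) (t : ℝ) :
    HasDerivAt (fun s : ℝ => exp (s • B) w₀) (B (exp (t • B) w₀)) t :=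
  ((ContinuousLinearMap.apply ℂ E w₀).restrictScalars ℝ).hasFDerivAt.comp_hasDerivAt t
    (hasDerivAt_exp_smul_const' B t)

theorem eq_exp_smul_apply_of_hasDerivAt [CompleteSpace E] {B : E →L[ℂ] E} {w : ℝ → E}
    (hw : ∀ t, HasDerivAt w (B (w t)) t) (t : ℝ) : w t = exp (t • B) (w 0) := by
  have := ODE_solution_unique_univ (v := fun _ => B) (s := fun _ => Set.univ) (t₀ := 0)
    (fun _ => B.lipschitz.lipschitzOnWith) (fun t => ⟨hw t, trivial⟩)
    (fun t => ⟨hasDerivAt_exp_smul_apply B (w 0) t, trivial⟩) (by simp)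
  exact congrFun this t

theorem exp_smul_apply_eq_sum_of_pow_apply_eq_zero [CompleteSpace E] (B : E →L[ℂ] E) (μ : ℂ)
    {w : E} {k : ℕ} (hk : ((B - μ • 1) ^ k) w = 0) (t : ℝ) :
    exp (t • B) w = ∑ n ∈ range k,
      Complex.exp (t * μ) • ((t ^ n / n.factorial : ℝ) • ((B - μ • 1) ^ n) w) := by
  set N := B - μ • 1
  have hN : ∀ n, k ≤ n → (N ^ n) w = 0 := fun n hn => by
    rw [← Nat.sub_add_cancel hn, pow_add, mul_apply_eq_comp, hk, map_zero]
  have hcomm : Commute (t • (μ • 1 : E →L[ℂ] E)) (t • N) :=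
    ((Commute.one_left N).smul_left μ).smul_left t |>.smul_right t
  have hball : ∀ X : E →L[ℂ] E, X ∈ Metric.eball 0 (expSeries ℝ (E →L[ℂ] E)).radius :=
    fun X => (expSeries_radius_eq_top ℝ (E →L[ℂ] E)).symm ▸ edist_lt_top _ _
  have hsplit : exp (t • B) = Complex.exp (t * μ) • exp (t • N) := by
    rw [show t • B = t • (μ • 1 : E →L[ℂ] E) + t • N by simp [N, ← smul_add],
      exp_add_of_commute_of_mem_ball (𝕂 := ℝ) hcomm (hball _) (hball _), ← smul_assoc,
      Complex.real_smul, ← Algebra.algebraMap_eq_smul_one, ← algebraMap_exp_comm,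
      Complex.exp_eq_exp_ℂ, Algebra.algebraMap_eq_smul_one, smul_mul_assoc, one_mul]
  have hnil : exp (t • N) w = ∑ n ∈ range k, (t ^ n / n.factorial : ℝ) • (N ^ n) w := by
    rw [exp_eq_tsum ℝ]
    beta_reduce
    rw [← ContinuousLinearMap.apply_apply (𝕜 := ℂ) w,
      (ContinuousLinearMap.apply ℂ E w).map_tsum (expSeries_summable' _),
      tsum_eq_sum (s := range k)]
    · refine sum_congr rfl fun n _ => ?_
      simp [smul_pow, div_eq_inv_mul, mul_smul]
    · intro n hn
      simp [smul_pow, hN n (by simpa using hn)]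
  rw [hsplit, _root_.smul_apply, hnil, smul_sum]

theorem tendsto_exp_smul_apply_of_pow_apply_eq_zero [CompleteSpace E] (B : E →L[ℂ] E) {μ : ℂ}
    (hμ : μ.re < 0) {w : E} {k : ℕ} (hk : ((B - μ • 1) ^ k) w = 0) :
    Tendsto (fun t : ℝ => exp (t • B) w) atTop (𝓝 0) := by
  simp_rw [exp_smul_apply_eq_sum_of_pow_apply_eq_zero B μ hk]
  rw [← sum_const_zero (s := range k)]
  refine tendsto_finsetSum _ fun n _ => ?_
  rw [tendsto_zero_iff_norm_tendsto_zero]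
  refine ((tendsto_pow_mul_exp_mul_atTop_nhds_zero n hμ).const_mul
    (‖((B - μ • 1) ^ n) w‖ / n.factorial)).congr' ?_ |>.trans (by simp)
  filter_upwards [eventually_ge_atTop 0] with t ht
  rw [norm_smul, norm_smul, Complex.norm_exp, Real.norm_of_nonneg (by positivity)]
  simp only [Complex.mul_re, Complex.ofReal_re, Complex.ofReal_im, zero_mul, sub_zero]
  rw [mul_comm t]
  ring

theorem tendsto_exp_smul_apply [FiniteDimensional ℂ E] (B : E →L[ℂ] E)
    (hB : ∀ μ, HasEigenvalue (B : E →ₗ[ℂ] E) μ → μ.re < 0) (w : E) :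
    Tendsto (fun t : ℝ => exp (t • B) w) atTop (𝓝 0) := by
  have : CompleteSpace E := FiniteDimensional.complete ℂ E
  have hw : w ∈ ⨆ μ, maxGenEigenspace (B : E →ₗ[ℂ] E) μ := by
    simp [iSup_maxGenEigenspace_eq_top]
  refine Submodule.iSup_induction _
    (motive := fun w => Tendsto (fun t : ℝ => exp (t • B) w) atTop (𝓝 0)) hw ?_ (by simp)
    fun v v' hv hv' => by simpa using hv.add hv'
  intro μ v hv
  obtain ⟨k, hk⟩ := (mem_maxGenEigenspace _ _ _).mp hv
  rcases eq_or_ne v 0 with rfl | hv0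
  · simp
  refine tendsto_exp_smul_apply_of_pow_apply_eq_zero B (hB μ ?_) (k := k) ?_
  · exact hasEigenvalue_of_hasGenEigenvalue (k := k)
      ((Submodule.ne_bot_iff _).mpr ⟨v, mem_genEigenspace_nat.mpr hk, hv0⟩)
  · have : (((B - μ • 1) ^ k : E →L[ℂ] E) : E →ₗ[ℂ] E) = ((B : E →ₗ[ℂ] E) - μ • 1) ^ k := by
      ext; simp
    exact (LinearMap.congr_fun this v).trans hk

theorem tendsto_zero_of_hasDerivAt [FiniteDimensional ℂ E] {B : E →L[ℂ] E}
    (hB : ∀ μ, HasEigenvalue (B : E →ₗ[ℂ] E) μ → μ.re < 0) {w : ℝ → E}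
    (hw : ∀ t, HasDerivAt w (B (w t)) t) : Tendsto w atTop (𝓝 0) := by
  have : CompleteSpace E := FiniteDimensional.complete ℂ E
  simpa only [← eq_exp_smul_apply_of_hasDerivAt hw] using tendsto_exp_smul_apply B hB (w 0)

end LinearODE

theorem Matrix.tendsto_zero_of_hasDerivAt_mulVec {ι : Type*} [Fintype ι] [DecidableEq ι]
    {A : Matrix ι ι ℝ}
    (hA : ∀ μ, HasEigenvalue (toLin' (A.map (↑) : Matrix ι ι ℂ)) μ → μ.re < 0)
    {w : ℝ → ι → ℝ} (hw : ∀ t, HasDerivAt w (A *ᵥ w t) t) : Tendsto w atTop (𝓝 0) := by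
  set B := LinearMap.toContinuousLinearMap (toLin' (A.map (↑) : Matrix ι ι ℂ))
  have hwc : ∀ t, HasDerivAt (fun s i => (w s i : ℂ)) (B fun i => w t i) t := fun t =>
    hasDerivAt_pi.mpr fun i => by
      refine (hasDerivAt_pi.mp (hw t) i).ofReal_comp.congr_deriv ?_
      exact RingHom.map_mulVec Complex.ofRealHom A (w t) i
  have hwc0 := tendsto_pi_nhds.mp (tendsto_zero_of_hasDerivAt (B := B) (by simpa [B]) hwc)
  exact tendsto_pi_nhds.mpr fun i => by
    simpa [Function.comp_def] using (Complex.continuous_re.tendsto 0).comp (hwc0 i)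

theorem tendsto_sub_of_forall_tendsto_sub_last {α : Type*} {l : Filter α} {n : ℕ}
    {w : α → Fin (n + 1) → ℝ}
    (h : ∀ a : Fin n, Tendsto (fun t => w t a.castSucc - w t (Fin.last n)) l (𝓝 0))
    (i j : Fin (n + 1)) : Tendsto (fun t => w t i - w t j) l (𝓝 0) := by
  have hlast (i : Fin (n + 1)) : Tendsto (fun t => w t i - w t (Fin.last n)) l (𝓝 0) := by
    induction i using Fin.lastCases with
    | last => simpa using tendsto_const_nhds
    | cast a => exact h a
  simpa using (hlast i).sub (hlast j)

/-- Coupled harmonic oscillators ẋᵢ = yᵢ, ẏᵢ = −xᵢ + Σⱼ γᵢⱼ(yⱼ − yᵢ) synchronize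
for all connected Γ. -/
theorem stmt16 {p : ℕ} (Γ : Matrix (Fin p) (Fin p) ℝ) (hΓ : IsConnectedMatrix Γ)
    (x y : ℝ → Fin p → ℝ)
    (hx : ∀ i t, HasDerivAt (fun s => x s i) (y t i) t)
    (hy : ∀ i t, HasDerivAt (fun s => y s i)
      (-(x t i) + ∑ j, Γ i j * (y t j - y t i)) t) :
    ∀ i j, Tendsto (fun t => |x t i - x t j| + |y t i - y t j|) atTop (nhds 0) := by
  rcases p with - | n
  · exact fun i => i.elim0
  have hy' (i : Fin (n + 1)) (t : ℝ) :
      HasDerivAt (fun s => y s i) (-(x t i) + (Γ *ᵥ y t) i) t :=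
    (hy i t).congr_deriv (by rw [← mulVec_sub_const hΓ.2.1 (y t) (y t i)]; rfl)
  set e : ℝ → Fin n ⊕ Fin n → ℝ := fun t => Sum.elim
    (fun a => x t a.castSucc - x t (Fin.last n)) (fun a => y t a.castSucc - y t (Fin.last n))
  have he (t : ℝ) : HasDerivAt e (fromBlocks 0 1 (-1) (reducedMatrix Γ) *ᵥ e t) t := by
    rw [hasDerivAt_pi]
    rintro (a | a)
    · refine ((hx a.castSucc t).sub (hx (Fin.last n) t)).congr_deriv ?_
      simp [e, fromBlocks_mulVec]
    · refine ((hy' a.castSucc t).sub (hy' (Fin.last n) t)).congr_deriv ?_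
      simp [e, fromBlocks_mulVec, neg_mulVec, reducedMatrix_mulVec_apply hΓ.2.1]
      ring
  have he0 := tendsto_pi_nhds.mp <| tendsto_zero_of_hasDerivAt_mulVec (fun μ hμ =>
    re_neg_of_hasEigenvalue_fromBlocks (fun _ => hΓ.re_neg_of_hasEigenvalue_reducedMatrix)
      (by simpa [fromBlocks_map, Matrix.map_neg] using hμ)) he
  intro i j
  have hxs := tendsto_sub_of_forall_tendsto_sub_last
    (fun a => by simpa [e] using he0 (Sum.inl a)) i j
  have hys := tendsto_sub_of_forall_tendsto_sub_last
    (fun a => by simpa [e] using he0 (Sum.inr a)) i j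
  simpa using hxs.abs.add hys.abs
end
end

section
/- Let S be skew-symmetric with (H,S) observable, and suppose a solution η of η̇ = (I_p ⊗ S + Γ ⊗ HᵀH)η satisfies (I_p ⊗ H)η(t) = 0 for all t in a nondegenerate interval [τ, τ+δ] and ((I_p − 𝟙rᵀ) ⊗ I_n)η(t) ≠ 0 somewhere there. Then a contradiction follows; hence on any invariant set where ηᵀ(Q̂ ⊗ HᵀH)η ≡ 0 with Q positive definite, one has ((I_p − 𝟙rᵀ) ⊗ I_n)η(t) = 0 for all t. -/
/-!
Once `(I_p ⊗ H) η` vanishes on the interval, the coupling term `Γ ⊗ HᵀH` drops out, so every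
block `ηᵢ` solves `η̇ᵢ = S ηᵢ` there while `H ηᵢ ≡ 0`. Differentiating this identity repeatedly
gives `H Sᵏ ηᵢ ≡ 0` on the open interval, observability forces `η ≡ 0` there and, by continuity,
on the closed interval, which contradicts `((I_p − 𝟙rᵀ) ⊗ I_n) η ≠ 0`.
-/

open Matrix NormedSpace Filter
open scoped Kronecker

noncomputable section

section Kronecker

variable {R l m n p : Type*} [CommSemiring R] [Fintype m] [Fintype p]

theorem Matrix.curry_kronecker_mulVec_s17 (A : Matrix l m R) (B : Matrix n p R) (v : m × p → R)
    (i : l) : Function.curry ((A ⊗ₖ B) *ᵥ v) i = ∑ k, A i k • (B *ᵥ Function.curry v k) := by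
  ext j
  simp only [Function.curry_apply, mulVec, dotProduct, kronecker_apply, Fintype.sum_prod_type,
    Finset.sum_apply, Pi.smul_apply, smul_eq_mul, Finset.mul_sum, mul_assoc]

theorem Matrix.curry_one_kronecker_mulVec [DecidableEq m] (B : Matrix n p R) (v : m × p → R)
    (i : m) : Function.curry (((1 : Matrix m m R) ⊗ₖ B) *ᵥ v) i = B *ᵥ Function.curry v i := by
  simp [curry_kronecker_mulVec_s17, one_apply]

theorem Matrix.kronecker_mulVec_eq_zero {A : Matrix l m R} {B : Matrix n p R} {v : m × p → R}
    (hv : ∀ k, B *ᵥ Function.curry v k = 0) : (A ⊗ₖ B) *ᵥ v = 0 := by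
  ext ⟨i, j⟩
  simpa [hv] using congrFun (curry_kronecker_mulVec_s17 A B v i) j

end Kronecker

theorem HasDerivAt.curry {ι κ : Type*} [Fintype ι] [Fintype κ] {f : ℝ → ι × κ → ℝ}
    {f' : ι × κ → ℝ} {t : ℝ} (hf : HasDerivAt f f' t) (i : ι) :
    HasDerivAt (fun s => Function.curry (f s) i) (Function.curry f' i) t :=
  hasDerivAt_pi.2 fun j => hasDerivAt_pi.1 hf (i, j)

section Observability

variable {ι κ : Type*} [Fintype ι] [Fintype κ] {H : Matrix ι κ ℝ} {S : Matrix κ κ ℝ}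
  {U : Set ℝ} {x : ℝ → κ → ℝ}

theorem mulVec_mulVec_eq_zero_of_hasDerivAt (hU : IsOpen U)
    (hx : ∀ t ∈ U, HasDerivAt x (S *ᵥ x t) t) (hHx : ∀ t ∈ U, H *ᵥ x t = 0) :
    ∀ t ∈ U, H *ᵥ (S *ᵥ x t) = 0 := by
  intro t ht
  have hderiv : HasDerivAt (fun s => H *ᵥ x s) (H *ᵥ (S *ᵥ x t)) t :=
    (H.mulVecLin.toContinuousLinearMap.hasFDerivAt).comp_hasDerivAt t (hx t ht)
  have hconst : (fun s => H *ᵥ x s) =ᶠ[nhds t] fun _ => 0 :=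
    eventually_of_mem (hU.mem_nhds ht) hHx
  exact hderiv.unique ((hasDerivAt_const t 0).congr_of_eventuallyEq hconst)

theorem mulVec_pow_mulVec_eq_zero_of_hasDerivAt [DecidableEq κ] (hU : IsOpen U)
    (hx : ∀ t ∈ U, HasDerivAt x (S *ᵥ x t) t) (k : ℕ) :
    ∀ {H : Matrix ι κ ℝ}, (∀ t ∈ U, H *ᵥ x t = 0) →
      ∀ t ∈ U, H *ᵥ (S ^ k *ᵥ x t) = 0 := by
  induction k with
  | zero => intro H hHx; simpa using hHx
  | succ k ih =>
    intro H hHx t ht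
    have hHSx : ∀ t ∈ U, (H * S) *ᵥ x t = 0 := fun t ht => by
      rw [← mulVec_mulVec]; exact mulVec_mulVec_eq_zero_of_hasDerivAt hU hx hHx t ht
    calc H *ᵥ (S ^ (k + 1) *ᵥ x t) = (H * S) *ᵥ (S ^ k *ᵥ x t) := by
          rw [mulVec_mulVec, mulVec_mulVec, Matrix.mul_assoc, ← pow_succ']
      _ = 0 := ih hHSx t ht

theorem Observable.eq_zero_of_hasDerivAt {m n : ℕ} {H : Matrix (Fin m) (Fin n) ℝ}
    {S : Matrix (Fin n) (Fin n) ℝ} {x : ℝ → Fin n → ℝ} (hHS : Observable H S) (hU : IsOpen U)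
    (hx : ∀ t ∈ U, HasDerivAt x (S *ᵥ x t) t) (hHx : ∀ t ∈ U, H *ᵥ x t = 0) :
    ∀ t ∈ U, x t = 0 := fun t ht =>
  hHS (x t) fun k _ => mulVec_pow_mulVec_eq_zero_of_hasDerivAt hU hx k hHx t ht

end Observability

theorem stmt17_general {p n m : ℕ} (S : Matrix (Fin n) (Fin n) ℝ)
    (H : Matrix (Fin m) (Fin n) ℝ) (hHS : Observable H S)
    (Γ : Matrix (Fin p) (Fin p) ℝ) (r : Fin p → ℝ)
    (η : ℝ → Fin p × Fin n → ℝ)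
    (hη : ∀ t, HasDerivAt η
      (((1 : Matrix (Fin p) (Fin p) ℝ) ⊗ₖ S + Γ ⊗ₖ (Hᵀ * H)) *ᵥ η t) t)
    (τ δ : ℝ) (hδ : 0 < δ)
    (hzero : ∀ t ∈ Set.Icc τ (τ + δ),
      ((1 : Matrix (Fin p) (Fin p) ℝ) ⊗ₖ H) *ᵥ η t = 0)
    (hne : ∃ t ∈ Set.Icc τ (τ + δ),
      (((1 : Matrix (Fin p) (Fin p) ℝ) - vecMulVec (ones p) r) ⊗ₖ
        (1 : Matrix (Fin n) (Fin n) ℝ)) *ᵥ η t ≠ 0) :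
    False := by
  have hHη : ∀ t ∈ Set.Icc τ (τ + δ), ∀ i, H *ᵥ Function.curry (η t) i = 0 := fun t ht i => by
    rw [← curry_one_kronecker_mulVec, hzero t ht]; rfl
  have hSη : ∀ t ∈ Set.Icc τ (τ + δ), ∀ i,
      HasDerivAt (fun s => Function.curry (η s) i) (S *ᵥ Function.curry (η t) i) t :=
    fun t ht i => by
      have hΓ : (Γ ⊗ₖ (Hᵀ * H)) *ᵥ η t = 0 :=
        kronecker_mulVec_eq_zero fun k => by rw [← mulVec_mulVec, hHη t ht k, mulVec_zero]
      simpa [add_mulVec, hΓ, curry_one_kronecker_mulVec] using (hη t).curry i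
  have hIoo : Set.EqOn η 0 (Set.Ioo τ (τ + δ)) := fun t ht => by
    ext ⟨i, j⟩
    refine congrFun (hHS.eq_zero_of_hasDerivAt isOpen_Ioo (fun s hs => hSη s ?_ i)
      (fun s hs => hHη s ?_ i) t ht) j <;> exact Set.Ioo_subset_Icc_self hs
  have hIcc : Set.EqOn η 0 (Set.Icc τ (τ + δ)) := by
    rw [← closure_Ioo (by linarith)]
    have hcont : Continuous η := continuous_iff_continuousAt.2 fun t => (hη t).continuousAt
    exact hIoo.closure hcont continuous_const
  obtain ⟨t, ht, hηt⟩ := hne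
  exact hηt (by rw [hIcc ht, Pi.zero_apply, mulVec_zero])

/-- If a solution η of η̇ = (I_p ⊗ S + Γ ⊗ HᵀH)η satisfies (I_p ⊗ H)η ≡ 0 on a
nondegenerate interval while ((I_p − 𝟙rᵀ) ⊗ I_n)η does not vanish somewhere on that
interval, a contradiction follows. -/
theorem stmt17 {p n m : ℕ} (S : Matrix (Fin n) (Fin n) ℝ) (hS : Sᵀ = -S)
    (H : Matrix (Fin m) (Fin n) ℝ) (hHS : Observable H S)
    (Γ : Matrix (Fin p) (Fin p) ℝ) (r : Fin p → ℝ)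
    (hrΓ : r ᵥ* Γ = 0) (hr1 : ∑ i, r i = 1)
    (η : ℝ → Fin p × Fin n → ℝ)
    (hη : ∀ t, HasDerivAt η
      (((1 : Matrix (Fin p) (Fin p) ℝ) ⊗ₖ S + Γ ⊗ₖ (Hᵀ * H)) *ᵥ η t) t)
    (τ δ : ℝ) (hδ : 0 < δ)
    (hzero : ∀ t ∈ Set.Icc τ (τ + δ),
      ((1 : Matrix (Fin p) (Fin p) ℝ) ⊗ₖ H) *ᵥ η t = 0)
    (hne : ∃ t ∈ Set.Icc τ (τ + δ),
      (((1 : Matrix (Fin p) (Fin p) ℝ) - vecMulVec (ones p) r) ⊗ₖ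
        (1 : Matrix (Fin n) (Fin n) ℝ)) *ᵥ η t ≠ 0) :
    False :=
  stmt17_general S H hHS Γ r η hη τ δ hδ hzero hne
end
end
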